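/- arXiv:1506.08257 — 10 statements merged into one kernel-verified Lean document; each statement's English description precedes it below -/
import Mathlib

section
/- If A and B are similar r×r matrices via B = C⁻¹AC, then the ideal generated by the 2×2 minors of (Bx | x) is the image of the ideal generated by the 2×2 minors of (Ax | x) under the linear change of variables determined by C. In particular, the eigenschemes of similar matrices differ by a linear automorphism of projective space. -/
open MvPolynomial

/-- The ideal generated by the `2×2` minors of `(Ax | x)`. -/
noncomputable def eigIdeal {K : Type*} [Field K] {n : Type*} [Fintype n]
    (A : Matrix n n K) : Ideal (MvPolynomial n K) :=
  Ideal.span {p | ∃ i j : n,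
    p = (∑ k, C (A i k) * X k) * X j - (∑ k, C (A j k) * X k) * X i}

section Aux

variable {K : Type*} [Field K] {r : ℕ}

/-- Apply a matrix `M` (with entries in `K`) to a vector of polynomials. -/
noncomputable def Tm (M : Matrix (Fin r) (Fin r) K)
    (u : Fin r → MvPolynomial (Fin r) K) : Fin r → MvPolynomial (Fin r) K :=
  fun i => ∑ k, C (M i k) * u k

/-- The set of 2×2 minors of the matrix `(u | v)`. -/
def Sset (u v : Fin r → MvPolynomial (Fin r) K) : Set (MvPolynomial (Fin r) K) :=
  {p | ∃ i j, p = u i * v j - u j * v i}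

lemma Tm_Tm (M N : Matrix (Fin r) (Fin r) K) (u : Fin r → MvPolynomial (Fin r) K) :
    Tm M (Tm N u) = Tm (M * N) u := by
  funext i
  simp only [Tm, Matrix.mul_apply, map_sum, Finset.sum_mul, Finset.mul_sum, map_mul]
  rw [Finset.sum_comm]
  simp [mul_assoc]

lemma Tm_one (u : Fin r → MvPolynomial (Fin r) K) : Tm (1 : Matrix (Fin r) (Fin r) K) u = u := by
  funext i
  simp [Tm, Matrix.one_apply, apply_ite (C : K → MvPolynomial (Fin r) K), ite_mul,
    Finset.sum_ite_eq]

lemma minor_sum {R : Type*} [CommRing R] {n : Type*} [Fintype n] (a b u v : n → R) :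
    (∑ k, a k * u k) * (∑ l, b l * v l) - (∑ k, b k * u k) * (∑ l, a l * v l)
      = ∑ k, ∑ l, a k * b l * (u k * v l - u l * v k) := by
  simp only [mul_sub, Finset.sum_sub_distrib, Finset.sum_mul_sum]
  congr 1
  · exact Finset.sum_congr rfl fun k _ => Finset.sum_congr rfl fun l _ => by ring
  · rw [Finset.sum_comm]
    exact Finset.sum_congr rfl fun k _ => Finset.sum_congr rfl fun l _ => by ring

lemma span_Sset_le (M : Matrix (Fin r) (Fin r) K) (u v : Fin r → MvPolynomial (Fin r) K) :
    Ideal.span (Sset (Tm M u) (Tm M v)) ≤ Ideal.span (Sset u v) := by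
  rw [Ideal.span_le]
  rintro p ⟨i, j, rfl⟩
  show (Tm M u i * Tm M v j - Tm M u j * Tm M v i) ∈ Ideal.span (Sset u v)
  simp only [Tm]
  rw [minor_sum]
  refine Ideal.sum_mem _ fun k _ => Ideal.sum_mem _ fun l _ => ?_
  exact Ideal.mul_mem_left _ _ (Ideal.subset_span ⟨k, l, rfl⟩)

lemma span_Sset_Tm (M : Matrix (Fin r) (Fin r) K) (hM : IsUnit M)
    (u v : Fin r → MvPolynomial (Fin r) K) :
    Ideal.span (Sset (Tm M u) (Tm M v)) = Ideal.span (Sset u v) := by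
  refine le_antisymm (span_Sset_le M u v) ?_
  have h := span_Sset_le M⁻¹ (Tm M u) (Tm M v)
  have hinv : M⁻¹ * M = 1 := Matrix.nonsing_inv_mul _ ((Matrix.isUnit_iff_isUnit_det M).mp hM)
  rwa [Tm_Tm, Tm_Tm, hinv, Tm_one, Tm_one] at h

end Aux

/-- If `B = C⁻¹AC`, then `I_B` is the image of `I_A` under the linear change of
variables `x ↦ Cx`; so eigenschemes of similar matrices differ by a linear
automorphism of projective space. -/
theorem eigIdeal_of_similar {K : Type*} [Field K] {r : ℕ}
    (A B Cm : Matrix (Fin r) (Fin r) K) (hC : IsUnit Cm) (hB : B = Cm⁻¹ * A * Cm) :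
    Ideal.map
      ((MvPolynomial.aeval fun i : Fin r => ∑ j, MvPolynomial.C (Cm i j) * MvPolynomial.X j :
        MvPolynomial (Fin r) K →ₐ[K] MvPolynomial (Fin r) K) : MvPolynomial (Fin r) K →+* MvPolynomial (Fin r) K)
      (eigIdeal A) = eigIdeal B := by
  have hdet := (Matrix.isUnit_iff_isUnit_det Cm).mp hC
  have hCB : A * Cm = Cm * B := by
    rw [hB, ← Matrix.mul_assoc, ← Matrix.mul_assoc, Matrix.mul_nonsing_inv _ hdet,
      Matrix.one_mul]
  set f := (MvPolynomial.aeval fun i : Fin r => ∑ j, MvPolynomial.C (Cm i j) * MvPolynomial.X j :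
    MvPolynomial (Fin r) K →ₐ[K] MvPolynomial (Fin r) K) with hf
  have himg : (f : MvPolynomial (Fin r) K →+* MvPolynomial (Fin r) K) ''
      {p | ∃ i j : Fin r,
        p = (∑ k, C (A i k) * X k) * X j - (∑ k, C (A j k) * X k) * X i}
      = Sset (Tm (Cm * B) X) (Tm Cm X) := by
    have hu : ∀ i : Fin r, f (∑ k, C (A i k) * X k) = Tm (Cm * B) X i := by
      intro i
      have : f (∑ k, C (A i k) * X k) = Tm A (Tm Cm X) i := by
        simp [hf, Tm, algebraMap_eq]
      rw [this, show Tm A (Tm Cm X) = Tm (A * Cm) X from Tm_Tm A Cm X, hCB]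
    have hx : ∀ j : Fin r, f (X j) = Tm Cm X j := by
      intro j; simp [hf, Tm, algebraMap_eq]
    ext q
    constructor
    · rintro ⟨p, ⟨i, j, rfl⟩, rfl⟩
      exact ⟨i, j, by rw [map_sub, map_mul, map_mul, RingHom.coe_coe, hu i, hu j, hx i, hx j]⟩
    · rintro ⟨i, j, rfl⟩
      refine ⟨(∑ k, C (A i k) * X k) * X j - (∑ k, C (A j k) * X k) * X i, ⟨i, j, rfl⟩, ?_⟩
      rw [map_sub, map_mul, map_mul, RingHom.coe_coe, hu i, hu j, hx i, hx j]
  rw [eigIdeal, Ideal.map_span, himg, ← Tm_Tm, span_Sset_Tm Cm hC]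
  rfl
end

section
/- Let J be a single Jordan block of size r ≥ 2 with eigenvalue λ. Then the ideal I_J of 2×2 minors of (Jx | x) is generated by the 2×2 minors of the 2×r matrix with rows (x_1, x_2, ..., x_{r−1}, x_r) and (x_2, x_3, ..., x_r, 0). -/
open MvPolynomial

/-- The `r×r` Jordan block with eigenvalue `λ`. -/
def jordanBlock (K : Type*) [Field K] (r : ℕ) (lam : K) : Matrix (Fin r) (Fin r) K :=
  fun i j => if i = j then lam else if (j : ℕ) = (i : ℕ) + 1 then 1 else 0

/-- The second row of the `2×r` matrix: `(x_2, x_3, ..., x_r, 0)` (0-indexed shift). -/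
noncomputable def shiftVar {K : Type*} [Field K] {r : ℕ} (i : Fin r) : MvPolynomial (Fin r) K :=
  if h : (i : ℕ) + 1 < r then X (⟨(i : ℕ) + 1, h⟩ : Fin r) else 0

lemma rowSum {K : Type*} [Field K] {r : ℕ} (lam : K) (i : Fin r) :
    (∑ k, C (jordanBlock K r lam i k) * X k : MvPolynomial (Fin r) K) =
      C lam * X i + shiftVar i := by
  have key : ∀ k : Fin r, (C (jordanBlock K r lam i k) * X k : MvPolynomial (Fin r) K)
      = (if i = k then C lam * X k else 0) + (if (k : ℕ) = (i : ℕ) + 1 then X k else 0) := by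
    intro k
    simp only [jordanBlock]
    split_ifs with h1 h2 <;> simp_all
  rw [Finset.sum_congr rfl (fun k _ => key k), Finset.sum_add_distrib,
    Finset.sum_ite_eq]
  simp only [Finset.mem_univ, if_true]
  congr 1
  by_cases h : (i : ℕ) + 1 < r
  · have : ∀ k : Fin r, ((k : ℕ) = (i : ℕ) + 1) = (k = (⟨(i : ℕ) + 1, h⟩ : Fin r)) := by
      intro k; simp [Fin.ext_iff]
    simp only [this]
    rw [Finset.sum_ite_eq' Finset.univ (⟨(i : ℕ) + 1, h⟩ : Fin r) X]
    simp [shiftVar, h]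
  · have : ∀ k : Fin r, ¬ ((k : ℕ) = (i : ℕ) + 1) := by
      intro k hk; exact h (hk ▸ k.isLt)
    simp [this, shiftVar, h]

/-- For a single Jordan block `J` of size `r ≥ 2`, the ideal `I_J` is generated by the
`2×2` minors of the `2×r` matrix with rows `(x_1,...,x_r)` and `(x_2,...,x_r,0)`. -/
theorem eigIdeal_jordanBlock_eq_minors {K : Type*} [Field K] {r : ℕ} (hr : 2 ≤ r) (lam : K) :
    eigIdeal (jordanBlock K r lam) =
      Ideal.span {p : MvPolynomial (Fin r) K | ∃ i j : Fin r,
        p = X i * shiftVar j - X j * shiftVar i} := by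
  unfold eigIdeal
  congr 1
  ext p
  constructor
  · rintro ⟨i, j, rfl⟩
    exact ⟨j, i, by rw [rowSum, rowSum]; ring⟩
  · rintro ⟨i, j, rfl⟩
    exact ⟨j, i, by rw [rowSum, rowSum]; ring⟩
end

section
/- Let J be a single Jordan block of size r ≥ 2. The radical of the ideal I_J of 2×2 minors of (Jx | x) equals the ideal generated by the variables x_2, x_3, ..., x_r. -/
open MvPolynomial

namespace JordanAux

variable {K : Type*} [Field K] {r : ℕ}

/-- The "shift" part of row `i` of `J x`: `X (i+1)` if it exists, else `0`. -/
noncomputable def s (K : Type*) [Field K] (r : ℕ) (i : Fin r) : MvPolynomial (Fin r) K :=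
  if h : (i : ℕ) + 1 < r then X (⟨(i : ℕ) + 1, h⟩ : Fin r) else 0

lemma X_congr {a b : Fin r} (h : (a : ℕ) = (b : ℕ)) :
    (X a : MvPolynomial (Fin r) K) = X b := by
  congr 1
  exact Fin.ext h

lemma sum_eq (lam : K) (i : Fin r) :
    (∑ k, C (jordanBlock K r lam i k) * X k) = C lam * X i + s K r i := by
  have hpt : ∀ k : Fin r, C (jordanBlock K r lam i k) * X k
      = (if k = i then C lam * X k else 0) +
        (if (k : ℕ) = (i : ℕ) + 1 then (X k : MvPolynomial (Fin r) K) else 0) := by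
    intro k
    simp only [jordanBlock]
    rcases eq_or_ne i k with h | h
    · subst h
      simp
    · rcases eq_or_ne ((k : ℕ)) ((i : ℕ) + 1) with h2 | h2
      · simp [h, Ne.symm h, h2]
      · simp [h, Ne.symm h, h2]
  rw [Finset.sum_congr rfl (fun k _ => hpt k), Finset.sum_add_distrib]
  congr 1
  · rw [Finset.sum_ite_eq' Finset.univ i (fun k => C lam * X k)]
    simp
  · unfold s
    split_ifs with h
    · rw [Finset.sum_eq_single (⟨(i : ℕ) + 1, h⟩ : Fin r)]
      · simp
      · intro b _ hb
        rw [if_neg]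
        intro hb2
        exact hb (Fin.ext hb2)
      · intro hmem
        exact absurd (Finset.mem_univ _) hmem
    · apply Finset.sum_eq_zero
      intro k _
      rw [if_neg]
      have := k.isLt
      omega

lemma gen_mem (lam : K) (i j : Fin r) :
    s K r i * X j - s K r j * X i ∈ eigIdeal (jordanBlock K r lam) := by
  have h : (∑ k, C (jordanBlock K r lam i k) * X k) * X j
      - (∑ k, C (jordanBlock K r lam j k) * X k) * X i ∈ eigIdeal (jordanBlock K r lam) :=
    Ideal.subset_span ⟨i, j, rfl⟩
  rw [sum_eq, sum_eq] at h
  convert h using 1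
  ring

lemma s_eval (i : Fin r) (h : (i : ℕ) + 1 < r) :
    s K r i = X (⟨(i : ℕ) + 1, h⟩ : Fin r) := dif_pos h

lemma s_zero (i : Fin r) (h : ¬ ((i : ℕ) + 1 < r)) : s K r i = 0 := dif_neg h

lemma s_mem (i : Fin r) :
    s K r i ∈ Ideal.span {p : MvPolynomial (Fin r) K | ∃ i : Fin r, (i : ℕ) ≠ 0 ∧ p = X i} := by
  unfold s
  split_ifs with h
  · exact Ideal.subset_span ⟨⟨(i : ℕ) + 1, h⟩, by simp, rfl⟩
  · exact zero_mem _

lemma pow_mem (lam : K) : ∀ n : ℕ, ∀ k : Fin r, (k : ℕ) + n + 1 = r → 1 ≤ (k : ℕ) →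
    X k ^ (2 ^ (n + 1)) ∈ eigIdeal (jordanBlock K r lam) := by
  intro n
  induction n with
  | zero =>
    intro k hk h1
    have hm : (k : ℕ) - 1 < r := by omega
    have h := gen_mem lam k (⟨(k : ℕ) - 1, hm⟩ : Fin r)
    have hs1 : s K r k = 0 := s_zero k (by omega)
    have hs2 : s K r (⟨(k : ℕ) - 1, hm⟩ : Fin r) = X k := by
      rw [s_eval _ (show ((⟨(k : ℕ) - 1, hm⟩ : Fin r) : ℕ) + 1 < r by simp; omega)]
      exact X_congr (by simp; omega)
    rw [hs1, hs2] at h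
    have h2 := (eigIdeal (jordanBlock K r lam)).neg_mem h
    convert h2 using 1
    ring
  | succ n ih =>
    intro k hk h1
    have hk1 : (k : ℕ) + 1 < r := by omega
    have hkm : (k : ℕ) - 1 < r := by omega
    set I := eigIdeal (jordanBlock K r lam) with hI
    have key : X k * X k - X (⟨(k : ℕ) + 1, hk1⟩ : Fin r) * X (⟨(k : ℕ) - 1, hkm⟩ : Fin r)
        ∈ I := by
      have h := gen_mem lam (⟨(k : ℕ) - 1, hkm⟩ : Fin r) k
      have hs1 : s K r (⟨(k : ℕ) - 1, hkm⟩ : Fin r) = X k := by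
        rw [s_eval _ (show ((⟨(k : ℕ) - 1, hkm⟩ : Fin r) : ℕ) + 1 < r by simp; omega)]
        exact X_congr (by simp; omega)
      have hs2 : s K r k = X (⟨(k : ℕ) + 1, hk1⟩ : Fin r) := s_eval k hk1
      rwa [hs1, hs2] at h
    have ih1 : X (⟨(k : ℕ) + 1, hk1⟩ : Fin r) ^ (2 ^ (n + 1)) ∈ I :=
      ih _ (by simp; omega) (by simp)
    rw [← Ideal.Quotient.eq_zero_iff_mem] at key ih1 ⊢
    rw [map_sub, map_mul, map_mul, sub_eq_zero] at key
    rw [map_pow] at ih1 ⊢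
    rw [show 2 ^ (n + 1 + 1) = 2 * 2 ^ (n + 1) from by ring, pow_mul, pow_two, key, mul_pow,
      ih1, zero_mul]

/-- The evaluation sending `X i ↦ t` if `i = 0`, else `0`. -/
noncomputable def phi (K : Type*) [Field K] (r : ℕ) :
    MvPolynomial (Fin r) K →ₐ[K] Polynomial K :=
  aeval (fun i : Fin r => if (i : ℕ) = 0 then Polynomial.X else 0)

lemma diff_mem (hr : 0 < r) (p : MvPolynomial (Fin r) K) :
    p - Polynomial.aeval (X (⟨0, hr⟩ : Fin r)) (phi K r p) ∈
      Ideal.span {p : MvPolynomial (Fin r) K | ∃ i : Fin r, (i : ℕ) ≠ 0 ∧ p = X i} := by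
  induction p using MvPolynomial.induction_on with
  | C a =>
    have : (C a : MvPolynomial (Fin r) K)
        - Polynomial.aeval (X (⟨0, hr⟩ : Fin r)) (phi K r (C a)) = 0 := by
      simp [phi]
    rw [this]
    exact zero_mem _
  | add p q hp hq =>
    have h := add_mem hp hq
    convert h using 1
    rw [map_add, map_add]
    ring
  | mul_X p i hp =>
    rcases eq_or_ne ((i : ℕ)) 0 with h0 | h0
    · have hi : i = ⟨0, hr⟩ := Fin.ext h0
      subst hi
      have heq : p * X (⟨0, hr⟩ : Fin r)
          - Polynomial.aeval (X (⟨0, hr⟩ : Fin r)) (phi K r (p * X (⟨0, hr⟩ : Fin r)))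
          = (p - Polynomial.aeval (X (⟨0, hr⟩ : Fin r)) (phi K r p)) * X (⟨0, hr⟩ : Fin r) := by
        rw [map_mul, map_mul,
          show phi K r (X (⟨0, hr⟩ : Fin r)) = Polynomial.X from by simp [phi],
          Polynomial.aeval_X]
        ring
      rw [heq]
      exact Ideal.mul_mem_right _ _ hp
    · have hphi : phi K r (X i) = 0 := by simp [phi, h0]
      have heq : p * X i - Polynomial.aeval (X (⟨0, hr⟩ : Fin r)) (phi K r (p * X i))
          = p * X i := by
        rw [map_mul, hphi, mul_zero, map_zero, sub_zero]
      rw [heq]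
      exact Ideal.mul_mem_left _ p (Ideal.subset_span ⟨i, h0, rfl⟩)

lemma P_eq_ker (hr : 0 < r) :
    Ideal.span {p : MvPolynomial (Fin r) K | ∃ i : Fin r, (i : ℕ) ≠ 0 ∧ p = X i}
      = RingHom.ker (phi K r) := by
  apply le_antisymm
  · rw [Ideal.span_le]
    rintro p ⟨i, hi, rfl⟩
    simp [RingHom.mem_ker, phi, hi]
  · intro p hp
    have h := diff_mem hr p
    rw [RingHom.mem_ker] at hp
    rwa [hp, map_zero, sub_zero] at h

end JordanAux

/-- For a single Jordan block of size `r ≥ 2`, the radical of `I_J` is the ideal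
generated by the variables `x_2,...,x_r`. -/
theorem radical_eigIdeal_jordanBlock {K : Type*} [Field K] {r : ℕ} (hr : 2 ≤ r) (lam : K) :
    (eigIdeal (jordanBlock K r lam)).radical =
      Ideal.span {p : MvPolynomial (Fin r) K | ∃ i : Fin r, (i : ℕ) ≠ 0 ∧ p = X i} := by
  have hr0 : 0 < r := by omega
  set P := Ideal.span {p : MvPolynomial (Fin r) K | ∃ i : Fin r, (i : ℕ) ≠ 0 ∧ p = X i}
    with hPdef
  have hP : P.IsPrime := by
    rw [hPdef, JordanAux.P_eq_ker hr0]
    exact RingHom.ker_isPrime _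
  apply le_antisymm
  · have hIP : eigIdeal (jordanBlock K r lam) ≤ P := by
      rw [eigIdeal, Ideal.span_le]
      rintro p ⟨i, j, rfl⟩
      rw [SetLike.mem_coe]
      rw [JordanAux.sum_eq lam i, JordanAux.sum_eq lam j]
      have h := sub_mem (Ideal.mul_mem_right (X j) P (JordanAux.s_mem i))
        (Ideal.mul_mem_right (X i) P (JordanAux.s_mem j))
      convert h using 1
      ring
    exact le_trans (Ideal.radical_mono hIP) (le_of_eq hP.radical)
  · rw [hPdef, Ideal.span_le]
    rintro p ⟨i, hi, rfl⟩
    have hlt := i.isLt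
    refine ⟨2 ^ (r - 1 - (i : ℕ) + 1), ?_⟩
    exact JordanAux.pow_mem lam (r - 1 - (i : ℕ)) i (by omega) (by omega)
end

section
/- For the ideal I_J of a single Jordan block of size r, the quotient ring R/I_J has Hilbert function H(t) = r for all t ≥ 1 (and H(0)=1); equivalently the corresponding projective scheme is zero-dimensional of degree r. -/
open MvPolynomial

namespace JBAux

noncomputable def Yv (K : Type*) [Field K] (r : ℕ) (i : Fin r) : MvPolynomial (Fin r) K :=
  if h : (i : ℕ) + 1 < r then X ⟨(i : ℕ) + 1, h⟩ else 0

variable {K : Type*} [Field K] {r : ℕ} {lam : K}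

lemma sum_row (lam : K) (i : Fin r) :
    (∑ k, C (jordanBlock K r lam i k) * X k) = C lam * X i + Yv K r i := by
  classical
  have h1 : ∀ k : Fin r, C (jordanBlock K r lam i k) * X k
      = (if k = i then C lam * X i else 0) + (if (k : ℕ) = (i : ℕ) + 1 then X k else 0) := by
    intro k
    simp only [jordanBlock]
    by_cases hk : k = i
    · subst hk
      simp
    · rw [if_neg (fun h => hk h.symm), if_neg hk, zero_add]
      by_cases hk2 : (k : ℕ) = (i : ℕ) + 1
      · simp [hk2]
      · simp [hk2]
  rw [Finset.sum_congr rfl fun k _ => h1 k, Finset.sum_add_distrib]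
  congr 1
  · rw [Finset.sum_ite_eq' Finset.univ i (fun _ => C lam * X i)]
    simp
  · by_cases h : (i : ℕ) + 1 < r
    · have : ∀ k : Fin r, ((k : ℕ) = (i : ℕ) + 1) ↔ k = ⟨(i : ℕ) + 1, h⟩ := by
        intro k; rw [Fin.ext_iff]
      rw [Finset.sum_congr rfl fun k _ => by rw [if_congr (this k) rfl rfl]]
      rw [Finset.sum_ite_eq' Finset.univ (⟨(i : ℕ) + 1, h⟩ : Fin r) (fun k => X k)]
      simp [Yv, h]
    · rw [Finset.sum_eq_zero, Yv, dif_neg h]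
      intro k _
      rw [if_neg]
      omega

lemma eig_eq (lam : K) : eigIdeal (jordanBlock K r lam)
    = Ideal.span {p | ∃ i j : Fin r, p = Yv K r i * X j - Yv K r j * X i} := by
  unfold eigIdeal
  congr 1
  ext q
  simp only [Set.mem_setOf_eq, sum_row lam]
  constructor <;> rintro ⟨i, j, rfl⟩ <;> exact ⟨i, j, by ring⟩

lemma gen_mem (lam : K) (i j : Fin r) :
    Yv K r i * X j - Yv K r j * X i ∈ eigIdeal (jordanBlock K r lam) := by
  rw [eig_eq]
  exact Ideal.subset_span ⟨i, j, rfl⟩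

lemma one_not_mem (lam : K) : (1 : MvPolynomial (Fin r) K) ∉ eigIdeal (jordanBlock K r lam) := by
  intro h
  have hker : eigIdeal (jordanBlock K r lam) ≤ RingHom.ker (constantCoeff : MvPolynomial (Fin r) K →+* K) := by
    rw [eig_eq lam, Ideal.span_le]
    rintro q ⟨i, j, rfl⟩
    simp [RingHom.mem_ker, Yv]
    split_ifs <;> simp
  have := hker h
  simp [RingHom.mem_ker] at this

/-- The weight-recording algebra map: `X i ↦ u * v ^ i`. -/
noncomputable def Phi (K : Type*) [Field K] (r : ℕ) :
    MvPolynomial (Fin r) K →ₐ[K] MvPolynomial (Fin 2) K :=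
  aeval (fun i : Fin r => X 0 * X 1 ^ (i : ℕ))

lemma Phi_X (i : Fin r) : Phi K r (X i) = X 0 * X 1 ^ (i : ℕ) := by
  simp [Phi]

lemma Phi_Yv (i : Fin r) :
    Phi K r (Yv K r i) = if (i : ℕ) + 1 < r then X 0 * X 1 ^ ((i : ℕ) + 1) else 0 := by
  unfold Yv
  split_ifs with h
  · rw [Phi_X]
  · simp

lemma pow_mem_aux (n a b : ℕ) (h : b + 1 = n) :
    (X 0 * X 1 ^ (a + 1)) * (X 0 * X 1 ^ b)
      ∈ Ideal.span {(X 1 : MvPolynomial (Fin 2) K) ^ n} := by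
  subst h
  rw [Ideal.mem_span_singleton]
  exact ⟨X 0 ^ 2 * X 1 ^ a, by ring⟩

lemma Phi_mem (lam : K) {p : MvPolynomial (Fin r) K} (hp : p ∈ eigIdeal (jordanBlock K r lam)) :
    Phi K r p ∈ Ideal.span {(X 1 : MvPolynomial (Fin 2) K) ^ r} := by
  have hle : Ideal.map (Phi K r) (eigIdeal (jordanBlock K r lam))
      ≤ Ideal.span {(X 1 : MvPolynomial (Fin 2) K) ^ r} := by
    rw [eig_eq lam, Ideal.map_span, Ideal.span_le]
    rintro q ⟨q', ⟨i, j, rfl⟩, rfl⟩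
    rw [SetLike.mem_coe]
    simp only [map_sub, map_mul, Phi_X, Phi_Yv]
    by_cases hi : (i : ℕ) + 1 < r <;> by_cases hj : (j : ℕ) + 1 < r
    · rw [if_pos hi, if_pos hj,
        show (X 0 * X 1 ^ ((i : ℕ) + 1)) * (X 0 * X 1 ^ (j : ℕ))
          - (X 0 * X 1 ^ ((j : ℕ) + 1)) * (X 0 * X 1 ^ (i : ℕ))
          = (0 : MvPolynomial (Fin 2) K) from by ring]
      exact Ideal.zero_mem _
    · rw [if_pos hi, if_neg hj, zero_mul, sub_zero]
      exact pow_mem_aux r (i : ℕ) (j : ℕ) (by omega)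
    · rw [if_neg hi, if_pos hj, zero_mul, zero_sub]
      exact neg_mem (pow_mem_aux r (j : ℕ) (i : ℕ) (by omega))
    · rw [if_neg hi, if_neg hj, zero_mul, zero_mul, sub_self]
      exact Ideal.zero_mem _
  exact hle (Ideal.mem_map_of_mem _ hp)

lemma coeff_vanish (lam : K) (t : ℕ) (j : ℕ) (hj : j < r) {p : MvPolynomial (Fin r) K}
    (hp : p ∈ eigIdeal (jordanBlock K r lam)) :
    coeff (Finsupp.single 0 t + Finsupp.single 1 j) (Phi K r p) = 0 := by
  obtain ⟨f, hf⟩ := Ideal.mem_span_singleton.1 (Phi_mem lam hp)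
  have hnle : ¬ ((Finsupp.single 1 r : Fin 2 →₀ ℕ)
      ≤ Finsupp.single 0 t + Finsupp.single 1 j) := by
    intro hle
    have h1 := Finsupp.le_def.1 hle 1
    simp [Finsupp.single_apply] at h1
    omega
  rw [hf, mul_comm, X_pow_eq_monomial, coeff_mul_monomial', if_neg hnle]

lemma degree_univ {r : ℕ} (d : Fin r →₀ ℕ) : d.degree = ∑ i : Fin r, d i :=
  Finset.sum_subset (Finset.subset_univ _) fun i _ h => Finsupp.notMem_support_iff.mp h

/-- Normal form generators of the degree `s+1` part of the quotient. -/
noncomputable def Bv (K : Type*) [Field K] (r : ℕ) (lam : K) (s : ℕ) :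
    Fin r → (MvPolynomial (Fin r) K ⧸ eigIdeal (jordanBlock K r lam)) :=
  fun j => Ideal.Quotient.mk _ (X (⟨0, j.pos⟩ : Fin r) ^ s * X j)

lemma Phi_Bv (s : ℕ) (j : Fin r) (h0 : 0 < r) :
    Phi K r (X (⟨0, h0⟩ : Fin r) ^ s * X j)
      = monomial (Finsupp.single 0 (s + 1) + Finsupp.single 1 (j : ℕ)) 1 := by
  rw [map_mul, map_pow, Phi_X, Phi_X]
  rw [show ((⟨0, h0⟩ : Fin r) : ℕ) = 0 from rfl, pow_zero, mul_one]
  rw [show (X 0 : MvPolynomial (Fin 2) K) ^ s * (X 0 * X 1 ^ (j : ℕ))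
      = X 0 ^ (s + 1) * X 1 ^ (j : ℕ) from by ring]
  rw [X_pow_eq_monomial, X_pow_eq_monomial, monomial_mul, mul_one]

lemma indep (lam : K) (s : ℕ) : LinearIndependent K (Bv K r lam s) := by
  classical
  rw [Fintype.linearIndependent_iff]
  intro c hc j0
  have hmem : (∑ j : Fin r, c j • (X (⟨0, j.pos⟩ : Fin r) ^ s * X j))
      ∈ eigIdeal (jordanBlock K r lam) := by
    rw [← Ideal.Quotient.eq_zero_iff_mem, ← Ideal.Quotient.mkₐ_eq_mk K, map_sum, ← hc]
    apply Finset.sum_congr rfl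
    intro j _
    rw [map_smul, Ideal.Quotient.mkₐ_eq_mk K]
    rfl
  have hval := coeff_vanish lam (s + 1) (j0 : ℕ) j0.isLt hmem
  rw [map_sum, coeff_sum] at hval
  have hterm : ∀ j : Fin r,
      coeff (Finsupp.single 0 (s + 1) + Finsupp.single 1 (j0 : ℕ))
        (Phi K r (c j • (X (⟨0, j.pos⟩ : Fin r) ^ s * X j)))
      = c j * (if j = j0 then 1 else 0) := by
    intro j
    rw [map_smul, coeff_smul, Phi_Bv s j j.pos, coeff_monomial, smul_eq_mul]
    congr 1
    by_cases h : j = j0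
    · rw [if_pos (by rw [h]), if_pos h]
    · rw [if_neg, if_neg h]
      intro heq
      exact h (Fin.val_inj.mp (Finsupp.single_injective 1 (add_left_cancel heq)))
  rw [Finset.sum_congr rfl fun j _ => hterm j] at hval
  simpa [Finset.sum_ite_eq'] using hval

/-- Weight used in the termination measure. -/
def wt (r : ℕ) (i : ℕ) : ℕ := i * (2 * r - i)

/-- Termination measure. -/
def mu (r : ℕ) (d : Fin r →₀ ℕ) : ℕ := ∑ i : Fin r, d i * wt r (i : ℕ)

lemma keyineq {r a b : ℕ} (ha : 1 ≤ a) (hab : a ≤ b) (hb : b + 2 ≤ r) :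
    wt r (a - 1) + wt r (b + 1) < wt r a + wt r b := by
  unfold wt
  have h1 : a ≤ 2 * r := by omega
  have h2 : a - 1 ≤ 2 * r := by omega
  have h3 : b ≤ 2 * r := by omega
  have h4 : b + 1 ≤ 2 * r := by omega
  zify [ha, h1, h2, h3, h4]
  nlinarith [sq_nonneg ((a : ℤ) - b)]

lemma mu_add_single (d : Fin r →₀ ℕ) (j : Fin r) :
    mu r (d + Finsupp.single j 1) = mu r d + wt r (j : ℕ) := by
  classical
  simp [mu, Finsupp.add_apply, add_mul, Finset.sum_add_distrib, Finsupp.single_apply,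
    ite_mul, Finset.sum_ite_eq]

lemma sum_add_single (d : Fin r →₀ ℕ) (j : Fin r) :
    ∑ i : Fin r, (d + Finsupp.single j 1 : Fin r →₀ ℕ) i = (∑ i : Fin r, d i) + 1 := by
  classical
  simp [Finsupp.add_apply, Finset.sum_add_distrib, Finsupp.single_apply,
    Finset.sum_ite_eq]

lemma sum_single (j : Fin r) (k : ℕ) :
    ∑ i : Fin r, (Finsupp.single j k : Fin r →₀ ℕ) i = k := by
  classical
  simp [Finsupp.single_apply, Finset.sum_ite_eq]

lemma X_mul_X (i j : Fin r) :
    X i * X j = monomial (Finsupp.single i 1 + Finsupp.single j 1) (1 : K) := by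
  rw [← pow_one (X i), ← pow_one (X j), X_pow_eq_monomial, X_pow_eq_monomial,
    monomial_mul, one_mul]

lemma reduce (lam : K) (s : ℕ) (N : ℕ) :
    ∀ d : Fin r →₀ ℕ, mu r d < N → (∑ i : Fin r, d i) = s + 1 →
    Ideal.Quotient.mk (eigIdeal (jordanBlock K r lam)) (monomial d 1)
      ∈ Submodule.span K (Set.range (Bv K r lam s)) := by
  induction N with
  | zero => exact fun d h _ => absurd h (Nat.not_lt_zero _)
  | succ N ih =>
    intro d hmu hdeg
    classical
    by_cases hne : (d.support.filter (fun i : Fin r => (i : ℕ) ≠ 0)).Nonempty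
    · set S : Finset (Fin r) := d.support.filter (fun i : Fin r => (i : ℕ) ≠ 0) with hS
      set b : Fin r := S.max' hne with hbdef
      set a : Fin r := S.min' hne with hadef
      have hbmem' : d b ≠ 0 ∧ (b : ℕ) ≠ 0 := by
        have h := Finset.mem_filter.mp (S.max'_mem hne)
        exact ⟨Finsupp.mem_support_iff.mp h.1, h.2⟩
      have hamem' : d a ≠ 0 ∧ (a : ℕ) ≠ 0 := by
        have h := Finset.mem_filter.mp (S.min'_mem hne)
        exact ⟨Finsupp.mem_support_iff.mp h.1, h.2⟩
      have hab : a ≤ b := S.min'_le _ (S.max'_mem hne)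
      have ha1 : 1 ≤ (a : ℕ) := Nat.one_le_iff_ne_zero.2 hamem'.2
      by_cases hnorm : a = b ∧ d b = 1
      · -- normal form `x_0^s * x_b`
        set z : Fin r := ⟨0, b.pos⟩ with hz
        have hzb : z ≠ b := fun h => hbmem'.2 (by rw [← h])
        have hothers : ∀ i : Fin r, i ≠ b → i ≠ z → d i = 0 := by
          intro i hib hiz
          by_contra hdi
          have hi0 : (i : ℕ) ≠ 0 := fun h0 => hiz (Fin.ext h0)
          have hiS : i ∈ S :=
            Finset.mem_filter.mpr ⟨Finsupp.mem_support_iff.mpr hdi, hi0⟩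
          have h1 : a ≤ i := S.min'_le _ hiS
          have h2 : i ≤ b := S.le_max' _ hiS
          exact hib (le_antisymm h2 (hnorm.1 ▸ h1))
        have hd0 : d = Finsupp.single z (d z) + Finsupp.single b 1 := by
          ext i
          rw [Finsupp.add_apply, Finsupp.single_apply, Finsupp.single_apply]
          by_cases hib : i = b
          · subst hib
            rw [if_neg (fun h => hzb h), if_pos rfl, hnorm.2, zero_add]
          · by_cases hiz : i = z
            · subst hiz
              rw [if_pos rfl, if_neg (fun h : b = z => hzb h.symm), add_zero]
            · rw [if_neg (fun h => hiz h.symm), if_neg (fun h => hib h.symm), add_zero]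
              exact hothers i hib hiz
        have hdz : d z = s := by
          have h1 := hdeg
          rw [hd0, sum_add_single, sum_single] at h1
          omega
        apply Submodule.subset_span
        refine ⟨b, ?_⟩
        show Ideal.Quotient.mk _ (X (⟨0, b.pos⟩ : Fin r) ^ s * X b) = _
        congr 1
        rw [show (X z ^ s * X b : MvPolynomial (Fin r) K)
            = monomial (Finsupp.single z s + Finsupp.single b 1) 1 from by
          rw [← pow_one (X b), X_pow_eq_monomial, X_pow_eq_monomial, monomial_mul, one_mul]]
        rw [hd0, hdz]
      · -- reducible monomial
        have hcase : a = b → 2 ≤ d b := by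
          intro h
          rcases Decidable.em (d b = 1) with h1 | h1
          · exact absurd ⟨h, h1⟩ hnorm
          · have := hbmem'.1
            omega
        set d' : Fin r →₀ ℕ := d - Finsupp.single a 1 - Finsupp.single b 1 with hd'
        have hd : d = d' + Finsupp.single a 1 + Finsupp.single b 1 := by
          ext i
          rw [hd']
          simp only [Finsupp.add_apply, Finsupp.coe_tsub, Pi.sub_apply,
            Finsupp.single_apply]
          by_cases h1 : a = i <;> by_cases h2 : b = i
          · have hab' : a = b := h1.trans h2.symm
            have : 2 ≤ d i := by rw [← h2]; exact hcase hab'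
            rw [if_pos h1, if_pos h2]
            omega
          · have : 1 ≤ d i := by rw [← h1]; exact Nat.one_le_iff_ne_zero.2 hamem'.1
            rw [if_pos h1, if_neg h2]
            omega
          · have : 1 ≤ d i := by rw [← h2]; exact Nat.one_le_iff_ne_zero.2 hbmem'.1
            rw [if_neg h1, if_pos h2]
            omega
          · rw [if_neg h1, if_neg h2]
            omega
        set aP : Fin r := ⟨(a : ℕ) - 1, by omega⟩ with haP
        have haPv : (aP : ℕ) = (a : ℕ) - 1 := rfl
        have haP1 : (aP : ℕ) + 1 < r := by
          have := a.isLt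
          omega
        have hYaP : Yv K r aP = X a := by
          rw [Yv, dif_pos haP1]
          congr 1
          apply Fin.ext
          simp only [haPv]
          omega
        have hmono : monomial d (1 : K) = monomial d' 1 * (X a * X b) := by
          rw [hd, X_mul_X, monomial_mul, one_mul, add_assoc]
        have hkey : Ideal.Quotient.mk (eigIdeal (jordanBlock K r lam)) (monomial d 1)
            = Ideal.Quotient.mk _ (monomial d' 1 * (Yv K r b * X aP)) := by
          rw [Ideal.Quotient.eq, hmono]
          rw [show monomial d' (1 : K) * (X a * X b) - monomial d' 1 * (Yv K r b * X aP)
              = monomial d' 1 * (Yv K r aP * X b - Yv K r b * X aP) from by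
            rw [hYaP]; ring]
          exact Ideal.mul_mem_left _ _ (gen_mem lam aP b)
        rw [hkey]
        by_cases hb1 : (b : ℕ) + 1 < r
        · set bP : Fin r := ⟨(b : ℕ) + 1, hb1⟩ with hbP
          have hYb : Yv K r b = X bP := by rw [Yv, dif_pos hb1]
          have hmono2 : monomial d' (1 : K) * (Yv K r b * X aP)
              = monomial (d' + Finsupp.single bP 1 + Finsupp.single aP 1) 1 := by
            rw [hYb, X_mul_X, monomial_mul, one_mul, add_assoc]
          rw [hmono2]
          apply ih
          · have e1 : mu r d = mu r d' + wt r (a : ℕ) + wt r (b : ℕ) := by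
              rw [hd, mu_add_single, mu_add_single]
            have e2 : mu r (d' + Finsupp.single bP 1 + Finsupp.single aP 1)
                = mu r d' + wt r ((b : ℕ) + 1) + wt r ((a : ℕ) - 1) := by
              rw [mu_add_single, mu_add_single, haPv, hbP]
            have hlt := keyineq (r := r) ha1 (show (a : ℕ) ≤ (b : ℕ) from hab)
              (by omega)
            omega
          · have s1 : ∑ i : Fin r, (d' + Finsupp.single bP 1 + Finsupp.single aP 1 : Fin r →₀ ℕ) i
                = (∑ i : Fin r, d' i) + 1 + 1 := by
              rw [sum_add_single, sum_add_single]
            have s2 : ∑ i : Fin r, d i = (∑ i : Fin r, d' i) + 1 + 1 := by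
              rw [hd, sum_add_single, sum_add_single]
            omega
        · have hYb : Yv K r b = 0 := by rw [Yv, dif_neg hb1]
          rw [hYb, zero_mul, mul_zero, map_zero]
          exact Submodule.zero_mem _
    · -- pure power of the first variable
      have hsupp : ∃ i0 : Fin r, d i0 ≠ 0 := by
        by_contra h
        push_neg at h
        have : ∑ i : Fin r, d i = 0 := Finset.sum_eq_zero fun i _ => h i
        omega
      obtain ⟨i0, hi0⟩ := hsupp
      have hi0v : (i0 : ℕ) = 0 := by
        by_contra h
        exact hne ⟨i0, Finset.mem_filter.2 ⟨Finsupp.mem_support_iff.2 hi0, h⟩⟩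
      have hothers : ∀ i : Fin r, i ≠ i0 → d i = 0 := by
        intro i hii
        by_contra h
        have hiv : (i : ℕ) ≠ 0 := fun h0 => hii (Fin.ext (by rw [h0, hi0v]))
        exact hne ⟨i, Finset.mem_filter.2 ⟨Finsupp.mem_support_iff.2 h, hiv⟩⟩
      have hsum : ∑ i : Fin r, d i = d i0 :=
        Finset.sum_eq_single_of_mem i0 (Finset.mem_univ _) fun i _ hii => hothers i hii
      have hd : d = Finsupp.single i0 (s + 1) := by
        ext i
        rw [Finsupp.single_apply]
        by_cases hii : i = i0
        · subst hii
          rw [if_pos rfl]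
          omega
        · rw [if_neg (fun h => hii h.symm)]
          exact hothers i hii
      apply Submodule.subset_span
      refine ⟨i0, ?_⟩
      show Ideal.Quotient.mk _ (X (⟨0, i0.pos⟩ : Fin r) ^ s * X i0) = _
      congr 1
      have hz0 : (⟨0, i0.pos⟩ : Fin r) = i0 := Fin.ext (by simp [hi0v])
      rw [hz0, ← pow_succ, X_pow_eq_monomial, hd]

lemma span_eq (lam : K) (s : ℕ) :
    Submodule.map (Ideal.Quotient.mkₐ K (eigIdeal (jordanBlock K r lam))).toLinearMap
      (homogeneousSubmodule (Fin r) K (s + 1))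
    = Submodule.span K (Set.range (Bv K r lam s)) := by
  apply le_antisymm
  · rintro x ⟨p, hp, rfl⟩
    replace hp : MvPolynomial.IsHomogeneous p (s + 1) := hp
    have hrw : (Ideal.Quotient.mkₐ K (eigIdeal (jordanBlock K r lam))).toLinearMap p
        = ∑ v ∈ p.support,
          (Ideal.Quotient.mkₐ K (eigIdeal (jordanBlock K r lam))).toLinearMap
            (monomial v (coeff v p)) := by
      rw [← map_sum, support_sum_monomial_coeff]
    rw [hrw]
    apply Submodule.sum_mem
    intro v hv
    have hsmul : monomial v (coeff v p) = (coeff v p) • monomial v (1 : K) := by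
      rw [smul_monomial, smul_eq_mul, mul_one]
    rw [hsmul, map_smul]
    apply Submodule.smul_mem
    have hdeg : ∑ i : Fin r, v i = s + 1 := by
      rw [← degree_univ]
      by_contra h
      exact (mem_support_iff.1 hv) (hp.coeff_eq_zero h)
    have := reduce lam s (mu r v + 1) v (Nat.lt_succ_self _) hdeg
    simpa only [AlgHom.toLinearMap_apply, Ideal.Quotient.mkₐ_eq_mk] using this
  · rw [Submodule.span_le]
    rintro x ⟨j, rfl⟩
    refine ⟨X (⟨0, j.pos⟩ : Fin r) ^ s * X j, ?_, ?_⟩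
    · show X (⟨0, j.pos⟩ : Fin r) ^ s * X j ∈ homogeneousSubmodule (Fin r) K (s + 1)
      rw [mem_homogeneousSubmodule]
      simpa using ((isHomogeneous_X K (⟨0, j.pos⟩ : Fin r)).pow s).mul (isHomogeneous_X K j)
    · simp only [AlgHom.toLinearMap_apply, Ideal.Quotient.mkₐ_eq_mk]
      rfl

lemma zero_eq (lam : K) :
    Submodule.map (Ideal.Quotient.mkₐ K (eigIdeal (jordanBlock K r lam))).toLinearMap
      (homogeneousSubmodule (Fin r) K 0)
    = Submodule.span K
        {(1 : MvPolynomial (Fin r) K ⧸ eigIdeal (jordanBlock K r lam))} := by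
  apply le_antisymm
  · rintro x ⟨p, hp, rfl⟩
    replace hp : MvPolynomial.IsHomogeneous p 0 := hp
    have hC : p = C (coeff 0 p) := by
      ext v
      rw [coeff_C]
      by_cases hv : 0 = v
      · rw [if_pos hv, ← hv]
      · rw [if_neg hv]
        apply hp.coeff_eq_zero
        rw [Ne, Finsupp.degree_eq_zero_iff]
        exact fun h => hv h.symm
    have : (Ideal.Quotient.mkₐ K (eigIdeal (jordanBlock K r lam))).toLinearMap p
        = (coeff 0 p) • 1 := by
      conv_lhs => rw [hC, show (C (coeff 0 p) : MvPolynomial (Fin r) K) = (coeff 0 p) • 1 from by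
        rw [smul_eq_C_mul, mul_one]]
      rw [map_smul, AlgHom.toLinearMap_apply, map_one]
    rw [this]
    exact Submodule.smul_mem _ _ (Submodule.mem_span_singleton_self _)
  · rw [Submodule.span_singleton_le_iff_mem]
    refine ⟨1, ?_, ?_⟩
    · show (1 : MvPolynomial (Fin r) K) ∈ homogeneousSubmodule (Fin r) K 0
      rw [mem_homogeneousSubmodule]
      exact isHomogeneous_one _ _
    · rw [AlgHom.toLinearMap_apply, map_one]

lemma quot_one_ne_zero (lam : K) :
    (1 : MvPolynomial (Fin r) K ⧸ eigIdeal (jordanBlock K r lam)) ≠ 0 := by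
  intro h
  apply one_not_mem lam
  rw [← Ideal.Quotient.eq_zero_iff_mem, map_one]
  exact h

end JBAux

/-- For a single Jordan block `J` of size `r`, the Hilbert function of `R/I_J` is
`1` in degree `0` and `r` in every degree `t ≥ 1`: the eigenscheme is
zero-dimensional of degree `r`. -/
theorem hilbertFunction_jordanBlock {K : Type*} [Field K] (r : ℕ) (lam : K) :
    (∀ t : ℕ, 1 ≤ t →
      Module.finrank K
        (Submodule.map (Ideal.Quotient.mkₐ K (eigIdeal (jordanBlock K r lam))).toLinearMap
          (homogeneousSubmodule (Fin r) K t)) = r) ∧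
    Module.finrank K
      (Submodule.map (Ideal.Quotient.mkₐ K (eigIdeal (jordanBlock K r lam))).toLinearMap
        (homogeneousSubmodule (Fin r) K 0)) = 1 := by
  constructor
  · intro t ht
    obtain ⟨s, rfl⟩ : ∃ s, t = s + 1 := ⟨t - 1, by omega⟩
    rw [JBAux.span_eq lam s, finrank_span_eq_card (JBAux.indep lam s), Fintype.card_fin]
  · rw [JBAux.zero_eq lam, finrank_span_singleton (JBAux.quot_one_ne_zero lam)]
end

section
/- Let J_λ be a Jordan matrix with a single eigenvalue λ, consisting of Jordan blocks of distinct sizes r_1 > ... > r_ℓ with multiplicities k_1,...,k_ℓ. For each j, the quotient of the polynomial ring by the j-th primary component q_{λ,j} = I_λ + I_j has Hilbert function H(t) = r_j · binomial(t + k_1 + ... + k_j − 1, t). In particular the scheme of q_{λ,j} has projective dimension k_1+...+k_j−1 and degree r_j. -/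
set_option maxRecDepth 4000

open MvPolynomial

/-- The Jordan matrix `⊕ᵢ kᵢ J_{λ,rᵢ}` with a single eigenvalue `λ`: for each `i`, `kᵢ`
copies of the Jordan block of size `rᵢ`.  Its rows/columns are indexed by triples
`⟨i₁, i₃, i₂⟩` with `i₁ < ℓ`, `i₃ < r i₁` (position in the block), `i₂ < k i₁` (copy). -/
noncomputable def jordanSingle (K : Type*) [Field K] {ℓ : ℕ} (r k : Fin ℓ → ℕ) (lam : K) :
    Matrix (Σ i : Fin ℓ, Fin (r i) × Fin (k i)) (Σ i : Fin ℓ, Fin (r i) × Fin (k i)) K :=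
  Matrix.blockDiagonal' fun i => Matrix.blockDiagonal fun _ : Fin (k i) => jordanBlock K (r i) lam

/-- The variable ideal `I_j`, generated by the variables `x(i₁,i₂,i₃)` with either
`i₁ ≤ j` and `i₃ ≥ r_j + 1` (1-based), or `i₁ > j`. -/
noncomputable def varIdeal (K : Type*) [Field K] {ℓ : ℕ} (r k : Fin ℓ → ℕ) (j : Fin ℓ) :
    Ideal (MvPolynomial (Σ i : Fin ℓ, Fin (r i) × Fin (k i)) K) :=
  Ideal.span {p | ∃ v : Σ i : Fin ℓ, Fin (r i) × Fin (k i),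
    ((v.1 ≤ j ∧ r j ≤ (v.2.1 : ℕ)) ∨ j < v.1) ∧ p = X v}

namespace HilbAux

noncomputable section

variable {K : Type*} [Field K] {ℓ : ℕ} (r k : Fin ℓ → ℕ) (j : Fin ℓ)

abbrev Var (r k : Fin ℓ → ℕ) : Type := Σ i : Fin ℓ, Fin (r i) × Fin (k i)

abbrev Col (k : Fin ℓ → ℕ) (j : Fin ℓ) : Type := Σ i : {i : Fin ℓ // i ≤ j}, Fin (k i.1)

/-- survival predicate -/
def Surv (v : Var r k) : Prop := v.1 ≤ j ∧ ((v.2.1 : ℕ) < r j)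

def colFun (hk : 0 < k j) (v : Var r k) : Col k j :=
  if h : v.1 ≤ j then ⟨⟨v.1, h⟩, v.2.2⟩ else ⟨⟨j, le_refl j⟩, ⟨0, hk⟩⟩

def shiftM (M : Multiset (Var r k)) : ℕ := (M.map (fun v => (v.2.1 : ℕ))).sum

variable (K) in
def prodM (M : Multiset (Var r k)) : MvPolynomial (Var r k) K := (M.map X).prod

variable (K) in
def nxt (v : Var r k) : MvPolynomial (Var r k) K :=
  if h : (v.2.1 : ℕ) + 1 < r v.1 then X ⟨v.1, ⟨⟨(v.2.1 : ℕ) + 1, h⟩, v.2.2⟩⟩ else 0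

lemma jordanSingle_apply (lam : K) (v w : Var r k) :
    jordanSingle K r k lam v w =
      (if w = v then lam else 0) +
      (if h : (v.2.1 : ℕ) + 1 < r v.1 then
        (if w = ⟨v.1, ⟨⟨(v.2.1 : ℕ) + 1, h⟩, v.2.2⟩⟩ then (1:K) else 0) else 0) := by
  obtain ⟨i, p, c⟩ := v
  obtain ⟨i', p', c'⟩ := w
  by_cases hii : i' = i
  · subst hii
    rw [jordanSingle, Matrix.blockDiagonal'_apply_eq, Matrix.blockDiagonal_apply']
    simp only [jordanBlock, Sigma.mk.inj_iff, heq_eq_eq, Prod.mk.injEq, true_and,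
      Fin.ext_iff]
    have hp' := p'.2
    split_ifs <;> first | (exfalso; omega) | simp
  · rw [jordanSingle, Matrix.blockDiagonal'_apply_ne _ _ _ (fun h => hii h.symm)]
    simp only [Sigma.mk.inj_iff, hii, false_and, if_false, add_zero]
    simp

lemma varExt {i : Fin ℓ} (p p' : Fin (r i)) (c c' : Fin (k i)) (hp : (p : ℕ) = (p' : ℕ))
    (hc : c = c') : (⟨i, ⟨p, c⟩⟩ : Var r k) = ⟨i, ⟨p', c'⟩⟩ := by
  subst hc
  cases Fin.ext hp
  rfl

lemma sum_ite_X (cc : K) (u : Var r k) :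
    (∑ w : Var r k, C (if w = u then cc else 0) * X w) = C cc * X u := by
  rw [Finset.sum_eq_single u]
  · rw [if_pos rfl]
  · intro b _ hb; rw [if_neg hb, map_zero, zero_mul]
  · intro h; exact absurd (Finset.mem_univ u) h

lemma rowSum (lam : K) (v : Var r k) :
    (∑ w, C (jordanSingle K r k lam v w) * X w) = C lam * X v + nxt K r k v := by
  by_cases hnx : (v.2.1 : ℕ) + 1 < r v.1
  · have hrw : ∀ w : Var r k, C (jordanSingle K r k lam v w) * X w =
        C (if w = v then lam else 0) * X w +
        C (if w = (⟨v.1, ⟨⟨(v.2.1 : ℕ) + 1, hnx⟩, v.2.2⟩⟩ : Var r k) then (1:K) else 0) * X w := by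
      intro w
      rw [jordanSingle_apply, dif_pos hnx, map_add, add_mul]
    rw [Finset.sum_congr rfl fun w _ => hrw w, Finset.sum_add_distrib, sum_ite_X, sum_ite_X,
      nxt, dif_pos hnx, map_one, one_mul]
  · have hrw : ∀ w : Var r k, C (jordanSingle K r k lam v w) * X w =
        C (if w = v then lam else 0) * X w := by
      intro w
      rw [jordanSingle_apply, dif_neg hnx, add_zero]
    rw [Finset.sum_congr rfl fun w _ => hrw w, sum_ite_X, nxt, dif_neg hnx, add_zero]

lemma move_mem (lam : K) (a b : Var r k) :
    nxt K r k a * X b - nxt K r k b * X a ∈ eigIdeal (jordanSingle K r k lam) := by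
  have h : ((∑ w, C (jordanSingle K r k lam a w) * X w) * X b -
      (∑ w, C (jordanSingle K r k lam b w) * X w) * X a) ∈ eigIdeal (jordanSingle K r k lam) :=
    Ideal.subset_span ⟨a, b, rfl⟩
  rw [rowSum, rowSum] at h
  have e : (C lam * X a + nxt K r k a) * X b - (C lam * X b + nxt K r k b) * X a
      = nxt K r k a * X b - nxt K r k b * X a := by ring
  rwa [e] at h

lemma X_mem_varIdeal (v : Var r k) (hv : ¬ Surv r k j v) : X v ∈ varIdeal K r k j := by
  refine Ideal.subset_span ⟨v, ?_, rfl⟩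
  rw [Surv] at hv; push_neg at hv
  by_cases h : v.1 ≤ j
  · exact Or.inl ⟨h, hv h⟩
  · exact Or.inr (lt_of_not_ge h)

variable (K) in
def Ifull (lam : K) : Ideal (MvPolynomial (Var r k) K) :=
  eigIdeal (jordanSingle K r k lam) ⊔ varIdeal K r k j

lemma eig_le (lam : K) : eigIdeal (jordanSingle K r k lam) ≤ Ifull K r k j lam := le_sup_left

lemma var_le (lam : K) : varIdeal K r k j ≤ Ifull K r k j lam := le_sup_right

lemma step (hdec : StrictAnti r) (lam : K) (a b : Var r k) (hbj : b.1 ≤ j)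
    (h1 : 1 ≤ (a.2.1 : ℕ)) (h2 : (b.2.1 : ℕ) + 1 < r j) (f : MvPolynomial (Var r k) K) :
    f * (X a * X b) -
      f * (X (⟨a.1, ⟨⟨(a.2.1 : ℕ) - 1, lt_of_le_of_lt (Nat.sub_le _ _) a.2.1.2⟩, a.2.2⟩⟩ : Var r k) *
           X (⟨b.1, ⟨⟨(b.2.1 : ℕ) + 1, lt_of_lt_of_le h2 (hdec.antitone hbj)⟩, b.2.2⟩⟩ : Var r k))
      ∈ eigIdeal (jordanSingle K r k lam) := by
  obtain ⟨i, p, c⟩ := a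
  obtain ⟨i', p', c'⟩ := b
  simp only at h1 h2 ⊢
  have hp2 := p.2
  have hm := move_mem r k lam
    (⟨i, ⟨⟨(p : ℕ) - 1, lt_of_le_of_lt (Nat.sub_le _ _) p.2⟩, c⟩⟩ : Var r k) ⟨i', ⟨p', c'⟩⟩
  have e1 : nxt K r k (⟨i, ⟨⟨(p : ℕ) - 1, lt_of_le_of_lt (Nat.sub_le _ _) p.2⟩, c⟩⟩ : Var r k)
      = X (⟨i, ⟨p, c⟩⟩ : Var r k) := by
    rw [nxt, dif_pos (show (p : ℕ) - 1 + 1 < r i by omega)]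
    exact congrArg X (varExt r k _ _ _ _ (by simp; omega) rfl)
  have e2 : nxt K r k (⟨i', ⟨p', c'⟩⟩ : Var r k)
      = X (⟨i', ⟨⟨(p' : ℕ) + 1, lt_of_lt_of_le h2 (hdec.antitone hbj)⟩, c'⟩⟩ : Var r k) := by
    rw [nxt, dif_pos (lt_of_lt_of_le h2 (hdec.antitone hbj))]
  rw [e1, e2] at hm
  have hmm := Ideal.mul_mem_left _ f hm
  have e3 : f * (X (⟨i, ⟨p, c⟩⟩ : Var r k) * X (⟨i', ⟨p', c'⟩⟩ : Var r k) -
      X (⟨i', ⟨⟨(p' : ℕ) + 1, lt_of_lt_of_le h2 (hdec.antitone hbj)⟩, c'⟩⟩ : Var r k) *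
      X (⟨i, ⟨⟨(p : ℕ) - 1, lt_of_le_of_lt (Nat.sub_le _ _) p.2⟩, c⟩⟩ : Var r k)) =
      f * (X (⟨i, ⟨p, c⟩⟩ : Var r k) * X (⟨i', ⟨p', c'⟩⟩ : Var r k)) -
      f * (X (⟨i, ⟨⟨(p : ℕ) - 1, lt_of_le_of_lt (Nat.sub_le _ _) p.2⟩, c⟩⟩ : Var r k) *
           X (⟨i', ⟨⟨(p' : ℕ) + 1, lt_of_lt_of_le h2 (hdec.antitone hbj)⟩, c'⟩⟩ : Var r k)) := by
    ring
  rwa [e3] at hmm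

lemma stepKill (hdec : StrictAnti r) (lam : K) (a b : Var r k) (hbj : b.1 ≤ j)
    (h1 : 1 ≤ (a.2.1 : ℕ)) (h2 : r j ≤ (b.2.1 : ℕ) + 1) (f : MvPolynomial (Var r k) K) :
    f * (X a * X b) ∈ Ifull K r k j lam := by
  obtain ⟨i, p, c⟩ := a
  obtain ⟨i', p', c'⟩ := b
  simp only at h1 h2
  set a' : Var r k := ⟨i, ⟨⟨(p : ℕ) - 1, lt_of_le_of_lt (Nat.sub_le _ _) p.2⟩, c⟩⟩ with ha'
  have hm := move_mem r k lam a' ⟨i', ⟨p', c'⟩⟩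
  have e1 : nxt K r k a' = X (⟨i, ⟨p, c⟩⟩ : Var r k) := by
    rw [ha', nxt, dif_pos (show (p : ℕ) - 1 + 1 < r i by have := p.2; omega)]
    exact congrArg X (varExt r k _ _ _ _ (by simp; omega) rfl)
  rw [e1] at hm
  have hb : nxt K r k (⟨i', ⟨p', c'⟩⟩ : Var r k) * X a' ∈ Ifull K r k j lam := by
    rw [nxt]
    split
    · refine Ideal.mul_mem_right _ _ (var_le r k j lam (X_mem_varIdeal r k j _ ?_))
      rw [Surv]
      push_neg
      intro _
      simp only
      omega
    · rw [zero_mul]; exact zero_mem _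
  have hmem : X (⟨i, ⟨p, c⟩⟩ : Var r k) * X (⟨i', ⟨p', c'⟩⟩ : Var r k) ∈ Ifull K r k j lam := by
    have := add_mem (eig_le r k j lam hm) hb
    rwa [sub_add_cancel] at this
  exact Ideal.mul_mem_left _ f hmem

lemma prodM_cons (a : Var r k) (M : Multiset (Var r k)) :
    prodM K r k (a ::ₘ M) = X a * prodM K r k M := by
  rw [prodM, Multiset.map_cons, Multiset.prod_cons, prodM]

lemma shiftM_cons (a : Var r k) (M : Multiset (Var r k)) :
    shiftM r k (a ::ₘ M) = (a.2.1 : ℕ) + shiftM r k M := by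
  rw [shiftM, Multiset.map_cons, Multiset.sum_cons, shiftM]

lemma pos_le_shiftM {b : Var r k} {M : Multiset (Var r k)} (hb : b ∈ M) :
    (b.2.1 : ℕ) ≤ shiftM r k M :=
  Multiset.single_le_sum (fun x _ => Nat.zero_le x) _
    (Multiset.mem_map_of_mem (fun v => ((v.2.1 : ℕ) : ℕ)) hb)

lemma shiftM_erase {b : Var r k} {M : Multiset (Var r k)} (hb : b ∈ M) :
    shiftM r k M = (b.2.1 : ℕ) + shiftM r k (M.erase b) := by
  conv_lhs => rw [← Multiset.cons_erase hb]
  rw [shiftM_cons]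

lemma exists_pos_of_shift (M : Multiset (Var r k)) (h : 1 ≤ shiftM r k M) :
    ∃ a ∈ M, 1 ≤ (a.2.1 : ℕ) := by
  by_contra h'
  push_neg at h'
  have : shiftM r k M = 0 := by
    rw [shiftM]
    apply Multiset.sum_eq_zero
    intro x hx
    obtain ⟨v, hv, rfl⟩ := Multiset.mem_map.mp hx
    have := h' v hv
    omega
  omega

lemma prodM_two {b : Var r k} {M : Multiset (Var r k)} (hb : b ∈ M) {a : Var r k}
    (ha : a ∈ M.erase b) :
    prodM K r k M = prodM K r k ((M.erase b).erase a) * (X a * X b) := by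
  conv_lhs => rw [← Multiset.cons_erase hb, ← Multiset.cons_erase ha]
  rw [prodM_cons, prodM_cons]
  ring

lemma killShift (hdec : StrictAnti r) (hrpos : 0 < r j) (lam : K) (d : ℕ) :
    ∀ M : Multiset (Var r k), (∀ v ∈ M, Surv r k j v) → r j ≤ shiftM r k M →
    (∃ b ∈ M, r j - 1 - d ≤ (b.2.1 : ℕ)) → prodM K r k M ∈ Ifull K r k j lam := by
  induction d with
  | zero =>
    rintro M hS hsh ⟨b, hb, hposb⟩
    have hbS := hS b hb
    have hb2 : (b.2.1 : ℕ) < r j := hbS.2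
    have hsh' : 1 ≤ shiftM r k (M.erase b) := by
      have := shiftM_erase r k hb
      omega
    obtain ⟨a, ha, hposa⟩ := exists_pos_of_shift r k _ hsh'
    rw [prodM_two r k hb ha]
    exact stepKill r k j hdec lam a b hbS.1 hposa (by omega) _
  | succ d ih =>
    rintro M hS hsh ⟨b, hb, hposb⟩
    by_cases hcase : r j - 1 - d ≤ (b.2.1 : ℕ)
    · exact ih M hS hsh ⟨b, hb, hcase⟩
    · have hb1 : (b.2.1 : ℕ) + 1 < r j := by omega
      have hsherase := shiftM_erase r k hb
      have hsh' : 1 ≤ shiftM r k (M.erase b) := by omega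
      obtain ⟨a, ha, hposa⟩ := exists_pos_of_shift r k _ hsh'
      have haM : a ∈ M := Multiset.mem_of_mem_erase ha
      have haS := hS a haM
      have hbS := hS b hb
      set M₂ := (M.erase b).erase a with hM₂
      set a' : Var r k :=
        ⟨a.1, ⟨⟨(a.2.1 : ℕ) - 1, lt_of_le_of_lt (Nat.sub_le _ _) a.2.1.2⟩, a.2.2⟩⟩ with ha'
      set b' : Var r k :=
        ⟨b.1, ⟨⟨(b.2.1 : ℕ) + 1, lt_of_lt_of_le hb1 (hdec.antitone hbS.1)⟩, b.2.2⟩⟩ with hb'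
      have hstep := step r k j hdec lam a b hbS.1 hposa hb1 (prodM K r k M₂)
      have hshM2 := shiftM_erase r k ha
      rw [← hM₂] at hshM2
      have hM' : prodM K r k (a' ::ₘ b' ::ₘ M₂) ∈ Ifull K r k j lam := by
        apply ih
        · intro v hv
          rcases Multiset.mem_cons.mp hv with h | hv
          · subst h
            exact ⟨haS.1, by have := haS.2; show (a.2.1 : ℕ) - 1 < r j; omega⟩
          rcases Multiset.mem_cons.mp hv with h | hv
          · subst h
            exact ⟨hbS.1, by show (b.2.1 : ℕ) + 1 < r j; omega⟩
          · exact hS v (Multiset.mem_of_mem_erase (Multiset.mem_of_mem_erase hv))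
        · rw [shiftM_cons, shiftM_cons]
          show r j ≤ ((a.2.1 : ℕ) - 1) + (((b.2.1 : ℕ) + 1) + shiftM r k M₂)
          omega
        · exact ⟨b', Multiset.mem_cons_of_mem (Multiset.mem_cons_self _ _),
            show r j - 1 - d ≤ (b.2.1 : ℕ) + 1 by omega⟩
      have hsplit : prodM K r k M =
          (prodM K r k M₂ * (X a * X b) - prodM K r k M₂ * (X a' * X b')) +
          prodM K r k (a' ::ₘ b' ::ₘ M₂) := by
        rw [prodM_two r k hb ha, prodM_cons, prodM_cons, ← hM₂]
        ring
      rw [hsplit]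
      exact add_mem (eig_le r k j lam hstep) hM'

def decBy (a : Var r k) (d : ℕ) : Var r k :=
  ⟨a.1, ⟨⟨(a.2.1 : ℕ) - d, lt_of_le_of_lt (Nat.sub_le _ _) a.2.1.2⟩, a.2.2⟩⟩

lemma decBy_zero (a : Var r k) : decBy r k a 0 = a := by
  obtain ⟨i, p, c⟩ := a
  exact varExt r k _ _ _ _ (by simp) rfl

lemma pos_decBy (a : Var r k) (d : ℕ) : ((decBy r k a d).2.1 : ℕ) = (a.2.1 : ℕ) - d := rfl

lemma step' (hdec : StrictAnti r) (lam : K) (a b : Var r k) (hbj : b.1 ≤ j)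
    (h1 : 1 ≤ (a.2.1 : ℕ)) (h2 : (b.2.1 : ℕ) + 1 < r j) (f : MvPolynomial (Var r k) K) :
    f * (X a * X b) -
      f * (X (decBy r k a 1) *
           X (⟨b.1, ⟨⟨(b.2.1 : ℕ) + 1, lt_of_lt_of_le h2 (hdec.antitone hbj)⟩, b.2.2⟩⟩ : Var r k))
      ∈ eigIdeal (jordanSingle K r k lam) :=
  step r k j hdec lam a b hbj h1 h2 f

lemma transfer (hdec : StrictAnti r) (lam : K) (hk : 0 < k j) (d : ℕ) :
    ∀ (a : Var r k) (M₁ : Multiset (Var r k)), Surv r k j a → (∀ v ∈ M₁, Surv r k j v) →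
    d ≤ (a.2.1 : ℕ) → shiftM r k (a ::ₘ M₁) < r j → M₁ ≠ 0 →
    ∃ M₁' : Multiset (Var r k), (∀ v ∈ M₁', Surv r k j v) ∧
      M₁'.map (colFun r k j hk) = M₁.map (colFun r k j hk) ∧
      shiftM r k M₁' = shiftM r k M₁ + d ∧
      prodM K r k (a ::ₘ M₁) - prodM K r k (decBy r k a d ::ₘ M₁') ∈ Ifull K r k j lam := by
  induction d with
  | zero =>
    intro a M₁ ha hS _ hsh hne
    exact ⟨M₁, hS, rfl, by omega, by rw [decBy_zero, sub_self]; exact zero_mem _⟩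
  | succ d ih =>
    intro a M₁ ha hS hd hsh hne
    rw [shiftM_cons] at hsh
    have hbex : ∃ b ∈ M₁, (b.2.1 : ℕ) + 1 < r j := by
      by_contra h'
      push_neg at h'
      obtain ⟨b0, hb0⟩ := Multiset.exists_mem_of_ne_zero hne
      have h1 := h' b0 hb0
      have h2 := pos_le_shiftM r k hb0
      omega
    obtain ⟨b, hb, hb1⟩ := hbex
    have hbS := hS b hb
    have hshM1 : shiftM r k M₁ = (b.2.1 : ℕ) + shiftM r k (M₁.erase b) := shiftM_erase r k hb
    have hstep := step' r k j hdec lam a b hbS.1 (by omega) hb1 (prodM K r k (M₁.erase b))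
    have hpe : prodM K r k (a ::ₘ M₁) = prodM K r k (M₁.erase b) * (X a * X b) := by
      conv_lhs => rw [← Multiset.cons_erase hb]
      rw [prodM_cons, prodM_cons]
      ring
    have hpe2 : prodM K r k (decBy r k a 1 ::ₘ (⟨b.1, ⟨⟨(b.2.1 : ℕ) + 1, lt_of_lt_of_le hb1 (hdec.antitone hbS.1)⟩, b.2.2⟩⟩ : Var r k) ::ₘ M₁.erase b) =
        prodM K r k (M₁.erase b) * (X (decBy r k a 1) * X (⟨b.1, ⟨⟨(b.2.1 : ℕ) + 1, lt_of_lt_of_le hb1 (hdec.antitone hbS.1)⟩, b.2.2⟩⟩ : Var r k)) := by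
      rw [prodM_cons, prodM_cons]
      ring
    have ihres := ih (decBy r k a 1) ((⟨b.1, ⟨⟨(b.2.1 : ℕ) + 1, lt_of_lt_of_le hb1 (hdec.antitone hbS.1)⟩, b.2.2⟩⟩ : Var r k) ::ₘ M₁.erase b)
      ⟨ha.1, by rw [pos_decBy]; have := ha.2; omega⟩
      (by
        intro v hv
        rcases Multiset.mem_cons.mp hv with h | hv
        · subst h; exact ⟨hbS.1, by show (b.2.1 : ℕ) + 1 < r j; omega⟩
        · exact hS v (Multiset.mem_of_mem_erase hv))
      (by rw [pos_decBy]; omega)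
      (by
        rw [shiftM_cons, shiftM_cons, pos_decBy]
        show ((a.2.1 : ℕ) - 1) + (((b.2.1 : ℕ) + 1) + shiftM r k (M₁.erase b)) < r j
        omega)
      (Multiset.cons_ne_zero)
    obtain ⟨M₁', hS', hcols', hsh', hmem'⟩ := ihres
    refine ⟨M₁', hS', ?_, ?_, ?_⟩
    · rw [hcols']
      conv_rhs => rw [← Multiset.cons_erase hb]
      rw [Multiset.map_cons, Multiset.map_cons]
      rfl
    · rw [hsh', shiftM_cons]
      show ((b.2.1 : ℕ) + 1) + shiftM r k (M₁.erase b) + d = shiftM r k M₁ + (d + 1)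
      omega
    · have hdec2 : decBy r k (decBy r k a 1) d = decBy r k a (d + 1) :=
        varExt r k _ _ _ _
          (show ((a.2.1 : ℕ) - 1) - d = (a.2.1 : ℕ) - (d + 1) by omega) rfl
      rw [← hdec2]
      have hsum := add_mem (eig_le r k j lam hstep) hmem'
      rw [← hpe, ← hpe2] at hsum
      rwa [sub_add_sub_cancel] at hsum

lemma congrSame (hdec : StrictAnti r) (lam : K) (hk : 0 < k j) :
    ∀ (t' : ℕ) (M N : Multiset (Var r k)), Multiset.card M = t' →
    (∀ v ∈ M, Surv r k j v) → (∀ v ∈ N, Surv r k j v) →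
    M.map (colFun r k j hk) = N.map (colFun r k j hk) →
    shiftM r k M = shiftM r k N → shiftM r k M < r j →
    prodM K r k M - prodM K r k N ∈ Ifull K r k j lam := by
  intro t'
  induction t' with
  | zero =>
    intro M N hc _ _ hcols _ _
    have hM : M = 0 := Multiset.card_eq_zero.mp hc
    subst hM
    have hN : N = 0 := by
      have h2 := hcols.symm
      rw [Multiset.map_zero, Multiset.map_eq_zero] at h2
      exact h2
    subst hN
    rw [sub_self]
    exact zero_mem _
  | succ t' ih =>
    intro M N hc hSM hSN hcols hsh hshlt
    obtain ⟨a, M₁, rfl⟩ : ∃ a M₁, M = a ::ₘ M₁ := by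
      obtain ⟨a, ha⟩ := Multiset.exists_mem_of_ne_zero
        (show M ≠ 0 by intro h; rw [h] at hc; simp at hc)
      exact ⟨a, M.erase a, (Multiset.cons_erase ha).symm⟩
    have hcolmem : colFun r k j hk a ∈ N.map (colFun r k j hk) := by
      rw [← hcols, Multiset.map_cons]
      exact Multiset.mem_cons_self _ _
    obtain ⟨a', ha'N, hca⟩ := Multiset.mem_map.mp hcolmem
    have hNeq : N = a' ::ₘ N.erase a' := (Multiset.cons_erase ha'N).symm
    have hSa := hSM a (Multiset.mem_cons_self _ _)
    have hSa' := hSN a' ha'N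
    have hca0 := hca
    obtain ⟨i, p, c⟩ := a
    obtain ⟨i', p', c'⟩ := a'
    rw [colFun, colFun, dif_pos hSa'.1, dif_pos hSa.1] at hca
    have hi : i' = i := congrArg (fun x => (x.1 : Fin ℓ)) hca
    subst hi
    have hcc : c' = c := eq_of_heq (Sigma.mk.inj_iff.mp hca).2
    subst hcc
    -- now variables in scope: i', p (M side), p', c'
    have hcard1 : Multiset.card M₁ = t' := by
      rw [Multiset.card_cons] at hc
      omega
    have hcardN : Multiset.card N = t' + 1 := by
      have h2 := congrArg Multiset.card hcols
      rw [Multiset.card_map, Multiset.card_map] at h2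
      rw [← h2, Multiset.card_cons, hcard1]
    have hcardN₁ : Multiset.card (N.erase (⟨i', ⟨p', c'⟩⟩ : Var r k)) = t' := by
      rw [hNeq, Multiset.card_cons] at hcardN
      omega
    have hcolsMN : M₁.map (colFun r k j hk) =
        (N.erase (⟨i', ⟨p', c'⟩⟩ : Var r k)).map (colFun r k j hk) := by
      rw [hNeq, Multiset.map_cons, Multiset.map_cons, hca0] at hcols
      exact (Multiset.cons_inj_right _).mp hcols
    have hSM₁ : ∀ v ∈ M₁, Surv r k j v := fun v hv => hSM v (Multiset.mem_cons_of_mem hv)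
    have hSN₁ : ∀ v ∈ N.erase (⟨i', ⟨p', c'⟩⟩ : Var r k), Surv r k j v := fun v hv =>
      hSN v (Multiset.mem_of_mem_erase hv)
    rw [shiftM_cons] at hsh hshlt
    have hprojM : ((⟨i', ⟨p, c'⟩⟩ : Var r k).2.1 : ℕ) = (p : ℕ) := rfl
    rw [hprojM] at hsh hshlt
    have hshN : shiftM r k N = (p' : ℕ) + shiftM r k (N.erase (⟨i', ⟨p', c'⟩⟩ : Var r k)) := by
      conv_lhs => rw [hNeq]
      rw [shiftM_cons]
    have main : ∀ (p₁ p₂ : Fin (r i')) (P₁ Q₁ : Multiset (Var r k)),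
        (∀ v ∈ P₁, Surv r k j v) → (∀ v ∈ Q₁, Surv r k j v) →
        P₁.map (colFun r k j hk) = Q₁.map (colFun r k j hk) →
        Multiset.card P₁ = t' → (i' : Fin ℓ) ≤ j →
        (p₁ : ℕ) < r j → (p₂ : ℕ) < (p₁ : ℕ) →
        (p₁ : ℕ) + shiftM r k P₁ = (p₂ : ℕ) + shiftM r k Q₁ →
        (p₁ : ℕ) + shiftM r k P₁ < r j →
        prodM K r k ((⟨i', ⟨p₁, c'⟩⟩ : Var r k) ::ₘ P₁) -
          prodM K r k ((⟨i', ⟨p₂, c'⟩⟩ : Var r k) ::ₘ Q₁) ∈ Ifull K r k j lam := by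
      intro p₁ p₂ P₁ Q₁ hSP hSQ hcolsPQ hcardP hij hp₁ hlt hsheq hshlt'
      have hPne : P₁ ≠ 0 := by
        intro h0
        subst h0
        have hQ : Q₁ = 0 := by
          have h2 := hcolsPQ.symm
          rw [Multiset.map_zero, Multiset.map_eq_zero] at h2
          exact h2
        subst hQ
        rw [shiftM, Multiset.map_zero, Multiset.sum_zero] at hsheq
        omega
      have hiS : Surv r k j (⟨i', ⟨p₁, c'⟩⟩ : Var r k) := ⟨hij, hp₁⟩
      obtain ⟨P₁', hSP', hcolsP', hshP', hmemP⟩ :=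
        transfer r k j hdec lam hk ((p₁ : ℕ) - (p₂ : ℕ)) (⟨i', ⟨p₁, c'⟩⟩ : Var r k) P₁ hiS hSP
          (by show (p₁ : ℕ) - (p₂ : ℕ) ≤ (p₁ : ℕ); omega)
          (by rw [shiftM_cons]; show (p₁ : ℕ) + shiftM r k P₁ < r j; omega) hPne
      have hdecEq : decBy r k (⟨i', ⟨p₁, c'⟩⟩ : Var r k) ((p₁ : ℕ) - (p₂ : ℕ))
          = (⟨i', ⟨p₂, c'⟩⟩ : Var r k) :=
        varExt r k _ _ _ _ (show (p₁ : ℕ) - ((p₁ : ℕ) - (p₂ : ℕ)) = (p₂ : ℕ) by omega) rfl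
      rw [hdecEq] at hmemP
      have hcardP' : Multiset.card P₁' = t' := by
        have h2 := congrArg Multiset.card hcolsP'
        rw [Multiset.card_map, Multiset.card_map] at h2
        omega
      have ihres := ih P₁' Q₁ hcardP' hSP' hSQ (by rw [hcolsP', hcolsPQ])
        (by omega) (by omega)
      have hXmul : X (⟨i', ⟨p₂, c'⟩⟩ : Var r k) * (prodM K r k P₁' - prodM K r k Q₁) ∈
          Ifull K r k j lam := Ideal.mul_mem_left _ _ ihres
      rw [mul_sub, ← prodM_cons, ← prodM_cons] at hXmul
      have hfin := add_mem hmemP hXmul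
      rwa [sub_add_sub_cancel] at hfin
    rcases lt_trichotomy (p' : ℕ) (p : ℕ) with hlt | heq | hgt
    · rw [hNeq]
      exact main p p' M₁ _ hSM₁ hSN₁ hcolsMN hcard1 hSa.1 hSa.2 hlt (by omega) (by omega)
    · have haa : (⟨i', ⟨p', c'⟩⟩ : Var r k) = ⟨i', ⟨p, c'⟩⟩ := varExt r k _ _ _ _ heq rfl
      have ihres := ih M₁ _ hcard1 hSM₁ hSN₁ hcolsMN (by omega) (by omega)
      have hXmul : X (⟨i', ⟨p, c'⟩⟩ : Var r k) *
          (prodM K r k M₁ - prodM K r k (N.erase (⟨i', ⟨p', c'⟩⟩ : Var r k))) ∈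
          Ifull K r k j lam := Ideal.mul_mem_left _ _ ihres
      rw [mul_sub, ← prodM_cons, ← prodM_cons] at hXmul
      have hNeq2 : N = (⟨i', ⟨p, c'⟩⟩ : Var r k) ::ₘ N.erase (⟨i', ⟨p', c'⟩⟩ : Var r k) :=
        hNeq.trans (by rw [haa])
      rw [hNeq2]
      exact hXmul
    · have hres := main p' p _ M₁ hSN₁ hSM₁ hcolsMN.symm hcardN₁ hSa'.1 hSa'.2 hgt
        (by omega) (by omega)
      rw [hNeq]
      have hneg := neg_mem hres
      rwa [neg_sub] at hneg

lemma killBig (hdec : StrictAnti r) (hrpos : 0 < r j) (lam : K) (M : Multiset (Var r k))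
    (hS : ∀ v ∈ M, Surv r k j v) (h : r j ≤ shiftM r k M) :
    prodM K r k M ∈ Ifull K r k j lam := by
  obtain ⟨b, hb, _⟩ := exists_pos_of_shift r k M (by omega)
  exact killShift r k j hdec hrpos lam (r j - 1) M hS h ⟨b, hb, by omega⟩

def incV (b : Var r k) (h : (b.2.1 : ℕ) + 1 < r b.1) : Var r k :=
  ⟨b.1, ⟨⟨(b.2.1 : ℕ) + 1, h⟩, b.2.2⟩⟩

lemma pos_incV (b : Var r k) (h : (b.2.1 : ℕ) + 1 < r b.1) :
    ((incV r k b h).2.1 : ℕ) = (b.2.1 : ℕ) + 1 := rfl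

lemma colFun_incV (hk : 0 < k j) (b : Var r k) (h : (b.2.1 : ℕ) + 1 < r b.1) :
    colFun r k j hk (incV r k b h) = colFun r k j hk b := rfl

def mkV (hdec : StrictAnti r) (c : Col k j) (p : ℕ) (hp : p < r j) : Var r k :=
  ⟨c.1.1, ⟨⟨p, lt_of_lt_of_le hp (hdec.antitone c.1.2)⟩, c.2⟩⟩

lemma colFun_mkV (hdec : StrictAnti r) (hk : 0 < k j) (c : Col k j) (p : ℕ) (hp : p < r j) :
    colFun r k j hk (mkV r k j hdec c p hp) = c := by
  obtain ⟨⟨i, hi⟩, cc⟩ := c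
  rw [mkV, colFun, dif_pos hi]

lemma existsRep (hdec : StrictAnti r) (hrpos : 0 < r j) (hk : 0 < k j) (t : ℕ) (ht : 1 ≤ t)
    (σ : Multiset (Col k j)) (hσ : Multiset.card σ = t) (P : ℕ) (hP : P < r j) :
    ∃ M : Multiset (Var r k), (∀ v ∈ M, Surv r k j v) ∧ Multiset.card M = t ∧
      M.map (colFun r k j hk) = σ ∧ shiftM r k M = P := by
  obtain ⟨c, σ₁, rfl⟩ : ∃ c σ₁, σ = c ::ₘ σ₁ := by
    obtain ⟨c, hc⟩ := Multiset.exists_mem_of_ne_zero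
      (show σ ≠ 0 by intro h; rw [h] at hσ; simp at hσ; omega)
    exact ⟨c, σ.erase c, (Multiset.cons_erase hc).symm⟩
  refine ⟨mkV r k j hdec c P hP ::ₘ σ₁.map (fun c' => mkV r k j hdec c' 0 hrpos),
    ?_, ?_, ?_, ?_⟩
  · intro v hv
    rcases Multiset.mem_cons.mp hv with h | hv
    · subst h; exact ⟨c.1.2, hP⟩
    · obtain ⟨c', _, rfl⟩ := Multiset.mem_map.mp hv
      exact ⟨c'.1.2, hrpos⟩
  · rw [Multiset.card_cons, Multiset.card_map]
    rw [Multiset.card_cons] at hσ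
    omega
  · rw [Multiset.map_cons, colFun_mkV, Multiset.map_map]
    congr 1
    rw [show ((colFun r k j hk) ∘ fun c' => mkV r k j hdec c' 0 hrpos) = id from
      funext fun c' => colFun_mkV r k j hdec hk c' 0 hrpos, Multiset.map_id]
  · rw [shiftM_cons]
    have h0 : shiftM r k (σ₁.map (fun c' => mkV r k j hdec c' 0 hrpos)) = 0 := by
      rw [shiftM]
      apply Multiset.sum_eq_zero
      intro x hx
      rw [Multiset.map_map] at hx
      obtain ⟨c', _, rfl⟩ := Multiset.mem_map.mp hx
      rfl
    rw [h0]
    show P + 0 = P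
    omega

open Classical in
def phiM (hk : 0 < k j) (t : ℕ) (M : Multiset (Var r k)) : (Sym (Col k j) t × Fin (r j)) → K :=
  if h : (∀ v ∈ M, Surv r k j v) ∧ shiftM r k M < r j ∧ Multiset.card M = t then
    Pi.single (⟨⟨M.map (colFun r k j hk), by rw [Multiset.card_map]; exact h.2.2⟩,
      ⟨shiftM r k M, h.2.1⟩⟩ : Sym (Col k j) t × Fin (r j)) (1 : K)
  else 0

variable (K) in
def phi (hk : 0 < k j) (t : ℕ) :
    MvPolynomial (Var r k) K →ₗ[K] ((Sym (Col k j) t × Fin (r j)) → K) :=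
  Module.Basis.constr (basisMonomials (Var r k) K) K (fun μ => phiM (K := K) r k j hk t μ.toMultiset)

lemma phi_monomial (hk : 0 < k j) (t : ℕ) (μ : Var r k →₀ ℕ) :
    phi K r k j hk t (monomial μ 1) = phiM r k j hk t μ.toMultiset := by
  have h := Module.Basis.constr_basis (basisMonomials (Var r k) K) K
    (fun μ => phiM (K := K) r k j hk t μ.toMultiset) μ
  rwa [coe_basisMonomials] at h

lemma prodM_eqm (μ : Var r k →₀ ℕ) : prodM K r k μ.toMultiset = monomial μ 1 := by
  induction μ using Finsupp.induction with
  | zero => simp [prodM, Finsupp.toMultiset_zero, monomial_zero']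
  | single_add a n f _ _ ih =>
    rw [Finsupp.toMultiset_add, Finsupp.toMultiset_single, prodM, Multiset.map_add,
      Multiset.prod_add]
    rw [show ((n • ({a} : Multiset (Var r k))).map X).prod = X a ^ n by
      rw [Multiset.nsmul_singleton, Multiset.map_replicate, Multiset.prod_replicate]]
    rw [show ((Finsupp.toMultiset f).map X).prod = prodM K r k f.toMultiset from rfl, ih]
    rw [X_pow_eq_monomial, monomial_mul, one_mul]

lemma prodM_eq_monomial [DecidableEq (Var r k)] (M : Multiset (Var r k)) :
    prodM K r k M = monomial M.toFinsupp 1 := by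
  have h := prodM_eqm r k (K := K) M.toFinsupp
  rwa [Multiset.toFinsupp_toMultiset] at h

lemma phi_prodM (hk : 0 < k j) (t : ℕ) (M : Multiset (Var r k)) :
    phi K r k j hk t (prodM K r k M) = phiM r k j hk t M := by
  classical
  rw [prodM_eq_monomial, phi_monomial, Multiset.toFinsupp_toMultiset]

lemma notSurv (v : Var r k) (h : (v.1 ≤ j ∧ r j ≤ (v.2.1 : ℕ)) ∨ j < v.1) :
    ¬ Surv r k j v := by
  rintro ⟨s1, s2⟩
  rcases h with ⟨h1, h2⟩ | h
  · omega
  · exact absurd s1 (not_le.mpr h)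

lemma prod_nxt (a b : Var r k) (M : Multiset (Var r k)) :
    prodM K r k M * (nxt K r k a * X b) =
      if h : (a.2.1 : ℕ) + 1 < r a.1 then prodM K r k (incV r k a h ::ₘ b ::ₘ M) else 0 := by
  rw [nxt]
  split
  · rw [prodM_cons, prodM_cons]
    simp only [incV]
    ring
  · rw [zero_mul, mul_zero]

lemma phiM_swap (hdec : StrictAnti r) (hk : 0 < k j) (t : ℕ) (a b : Var r k)
    (ha : (a.2.1 : ℕ) + 1 < r a.1) (hb : (b.2.1 : ℕ) + 1 < r b.1) (M : Multiset (Var r k)) :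
    phiM (K := K) r k j hk t (incV r k a ha ::ₘ b ::ₘ M)
      = phiM (K := K) r k j hk t (incV r k b hb ::ₘ a ::ₘ M) := by
  have himp : ∀ (x y : Var r k) (hx : (x.2.1 : ℕ) + 1 < r x.1) (hy : (y.2.1 : ℕ) + 1 < r y.1),
      ((∀ v ∈ (incV r k x hx ::ₘ y ::ₘ M), Surv r k j v) ∧
        shiftM r k (incV r k x hx ::ₘ y ::ₘ M) < r j ∧
        Multiset.card (incV r k x hx ::ₘ y ::ₘ M) = t) →
      ((∀ v ∈ (incV r k y hy ::ₘ x ::ₘ M), Surv r k j v) ∧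
        shiftM r k (incV r k y hy ::ₘ x ::ₘ M) < r j ∧
        Multiset.card (incV r k y hy ::ₘ x ::ₘ M) = t) := by
    rintro x y hx hy ⟨hS, hsh, hc⟩
    have hSx : Surv r k j (incV r k x hx) := hS _ (Multiset.mem_cons_self _ _)
    have hSy : Surv r k j y := hS _ (Multiset.mem_cons_of_mem (Multiset.mem_cons_self _ _))
    rw [shiftM_cons, shiftM_cons, pos_incV] at hsh
    have hx2 : (x.2.1 : ℕ) + 1 < r j := hSx.2
    have hy2 : (y.2.1 : ℕ) < r j := hSy.2
    refine ⟨?_, ?_, ?_⟩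
    · intro v hv
      rcases Multiset.mem_cons.mp hv with h | hv
      · subst h
        exact ⟨hSy.1, show (y.2.1 : ℕ) + 1 < r j by omega⟩
      rcases Multiset.mem_cons.mp hv with h | hv
      · rw [h]
        exact ⟨hSx.1, show (x.2.1 : ℕ) < r j by omega⟩
      · exact hS v (Multiset.mem_cons_of_mem (Multiset.mem_cons_of_mem hv))
    · rw [shiftM_cons, shiftM_cons, pos_incV]
      omega
    · rw [Multiset.card_cons, Multiset.card_cons] at hc ⊢
      omega
  by_cases h1 : (∀ v ∈ (incV r k a ha ::ₘ b ::ₘ M), Surv r k j v) ∧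
      shiftM r k (incV r k a ha ::ₘ b ::ₘ M) < r j ∧
      Multiset.card (incV r k a ha ::ₘ b ::ₘ M) = t
  · have h2 := himp a b ha hb h1
    simp only [phiM]
    rw [dif_pos h1, dif_pos h2]
    refine congrArg (fun z => Pi.single z (1 : K)) ?_
    refine Prod.ext ?_ ?_
    · apply Subtype.ext
      show (incV r k a ha ::ₘ b ::ₘ M).map (colFun r k j hk)
        = (incV r k b hb ::ₘ a ::ₘ M).map (colFun r k j hk)
      rw [Multiset.map_cons, Multiset.map_cons, Multiset.map_cons, Multiset.map_cons,
        colFun_incV, colFun_incV]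
      exact Multiset.cons_swap _ _ _
    · apply Fin.ext
      show shiftM r k (incV r k a ha ::ₘ b ::ₘ M) = shiftM r k (incV r k b hb ::ₘ a ::ₘ M)
      rw [shiftM_cons, shiftM_cons, shiftM_cons, shiftM_cons, pos_incV, pos_incV]
      omega
  · have h2 : ¬ ((∀ v ∈ (incV r k b hb ::ₘ a ::ₘ M), Surv r k j v) ∧
        shiftM r k (incV r k b hb ::ₘ a ::ₘ M) < r j ∧
        Multiset.card (incV r k b hb ::ₘ a ::ₘ M) = t) :=
      fun hcon => h1 (himp b a hb ha hcon)
    simp only [phiM]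
    rw [dif_neg h1, dif_neg h2]

lemma phiM_dead (hdec : StrictAnti r) (hk : 0 < k j) (t : ℕ) (a b : Var r k)
    (ha : (a.2.1 : ℕ) + 1 < r a.1) (hbn : ¬ ((b.2.1 : ℕ) + 1 < r b.1)) (M : Multiset (Var r k)) :
    phiM (K := K) r k j hk t (incV r k a ha ::ₘ b ::ₘ M) = 0 := by
  simp only [phiM]
  rw [dif_neg]
  rintro ⟨hS, hsh, _⟩
  have hSx : Surv r k j (incV r k a ha) := hS _ (Multiset.mem_cons_self _ _)
  have hSy : Surv r k j b := hS _ (Multiset.mem_cons_of_mem (Multiset.mem_cons_self _ _))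
  have h1 : (a.2.1 : ℕ) + 1 < r j := hSx.2
  have h2 : (b.2.1 : ℕ) < r j := hSy.2
  have h3 : r j ≤ r b.1 := hdec.antitone hSy.1
  rw [shiftM_cons, shiftM_cons, pos_incV] at hsh
  push_neg at hbn
  omega

lemma phi_eiggen (hdec : StrictAnti r) (hk : 0 < k j) (t : ℕ) (a b : Var r k)
    (M : Multiset (Var r k)) :
    phi K r k j hk t (prodM K r k M * (nxt K r k a * X b - nxt K r k b * X a)) = 0 := by
  rw [mul_sub, map_sub, prod_nxt, prod_nxt]
  by_cases ha : (a.2.1 : ℕ) + 1 < r a.1 <;> by_cases hb : (b.2.1 : ℕ) + 1 < r b.1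
  · rw [dif_pos ha, dif_pos hb, phi_prodM, phi_prodM,
      phiM_swap r k j hdec hk t a b ha hb M, sub_self]
  · rw [dif_pos ha, dif_neg hb, phi_prodM, phiM_dead r k j hdec hk t a b ha hb M,
      map_zero, sub_zero]
  · rw [dif_neg ha, dif_pos hb, phi_prodM, phiM_dead r k j hdec hk t b a hb ha M,
      map_zero, zero_sub, neg_zero]
  · rw [dif_neg ha, dif_neg hb, map_zero, sub_self]

lemma phi_vargen (hk : 0 < k j) (t : ℕ) (v : Var r k) (M : Multiset (Var r k))
    (hv : ¬ Surv r k j v) : phi K r k j hk t (prodM K r k M * X v) = 0 := by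
  have h : prodM K r k M * X v = prodM K r k (v ::ₘ M) := by
    rw [prodM_cons]
    ring
  rw [h, phi_prodM]
  simp only [phiM]
  rw [dif_neg]
  rintro ⟨hS, _, _⟩
  exact hv (hS v (Multiset.mem_cons_self _ _))

lemma phi_mulgen (hk : 0 < k j) (t : ℕ) (g : MvPolynomial (Var r k) K)
    (hg : ∀ M : Multiset (Var r k), phi K r k j hk t (prodM K r k M * g) = 0)
    (q : MvPolynomial (Var r k) K) : phi K r k j hk t (q * g) = 0 := by
  classical
  have hz : (phi K r k j hk t) ∘ₗ (LinearMap.mulRight K g) = 0 := by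
    apply Module.Basis.ext (basisMonomials (Var r k) K)
    intro μ
    rw [LinearMap.comp_apply, LinearMap.mulRight_apply, LinearMap.zero_apply,
      show ((basisMonomials (Var r k) K) μ) = monomial μ 1 from
        congrFun (coe_basisMonomials _ _) μ, ← prodM_eqm]
    exact hg _
  have h2 := LinearMap.congr_fun hz q
  rwa [LinearMap.comp_apply, LinearMap.mulRight_apply, LinearMap.zero_apply] at h2

lemma phi_vanish (hdec : StrictAnti r) (hk : 0 < k j) (t : ℕ) (lam : K)
    {p : MvPolynomial (Var r k) K} (hp : p ∈ Ifull K r k j lam) :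
    phi K r k j hk t p = 0 := by
  classical
  have hIf : Ifull K r k j lam = Ideal.span
      ({q | ∃ a b : Var r k, q = (∑ w, C (jordanSingle K r k lam a w) * X w) * X b -
        (∑ w, C (jordanSingle K r k lam b w) * X w) * X a} ∪
       {q | ∃ v : Var r k, ((v.1 ≤ j ∧ r j ≤ (v.2.1 : ℕ)) ∨ j < v.1) ∧ q = X v}) :=
    (Ideal.span_union _ _).symm
  rw [hIf] at hp
  obtain ⟨cf, hsupp, rfl⟩ := Submodule.mem_span_set.mp hp
  rw [map_finsuppSum]
  apply Finset.sum_eq_zero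
  intro g hgmem
  have hgS := hsupp (Finset.mem_coe.mpr hgmem)
  show phi K r k j hk t (cf g • g) = 0
  rw [smul_eq_mul]
  rcases hgS with ⟨a, b, rfl⟩ | ⟨v, hv, rfl⟩
  · have hgeq : (∑ w, C (jordanSingle K r k lam a w) * X w) * X b -
        (∑ w, C (jordanSingle K r k lam b w) * X w) * X a
        = nxt K r k a * X b - nxt K r k b * X a := by
      rw [rowSum, rowSum]
      ring
    rw [hgeq]
    exact phi_mulgen r k j hk t _ (fun M => phi_eiggen r k j hdec hk t a b M) _
  · exact phi_mulgen r k j hk t _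
      (fun M => phi_vargen r k j hk t v M (notSurv r k j v hv)) _

lemma degree_toFinsupp [DecidableEq (Var r k)] (M : Multiset (Var r k)) :
    Finsupp.degree (Multiset.toFinsupp M) = Multiset.card M := by
  have h := Finsupp.card_toMultiset (Multiset.toFinsupp M)
  rw [Multiset.toFinsupp_toMultiset] at h
  exact h.symm

noncomputable def NFm (hdec : StrictAnti r) (hrpos : 0 < r j) (hk : 0 < k j) (t : ℕ)
    (ht : 1 ≤ t) (b : Sym (Col k j) t × Fin (r j)) : Multiset (Var r k) :=
  (existsRep r k j hdec hrpos hk t ht (b.1 : Multiset (Col k j)) (Sym.card_coe (s := b.1))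
    (b.2 : ℕ) b.2.isLt).choose

lemma NFm_spec (hdec : StrictAnti r) (hrpos : 0 < r j) (hk : 0 < k j) (t : ℕ)
    (ht : 1 ≤ t) (b : Sym (Col k j) t × Fin (r j)) :
    (∀ v ∈ NFm r k j hdec hrpos hk t ht b, Surv r k j v) ∧
    Multiset.card (NFm r k j hdec hrpos hk t ht b) = t ∧
    (NFm r k j hdec hrpos hk t ht b).map (colFun r k j hk) = (b.1 : Multiset (Col k j)) ∧
    shiftM r k (NFm r k j hdec hrpos hk t ht b) = (b.2 : ℕ) :=
  (existsRep r k j hdec hrpos hk t ht (b.1 : Multiset (Col k j)) (Sym.card_coe (s := b.1))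
    (b.2 : ℕ) b.2.isLt).choose_spec

lemma phi_NF (hdec : StrictAnti r) (hrpos : 0 < r j) (hk : 0 < k j) (t : ℕ)
    (ht : 1 ≤ t) (b : Sym (Col k j) t × Fin (r j)) :
    phi K r k j hk t (prodM K r k (NFm r k j hdec hrpos hk t ht b)) = Pi.single b 1 := by
  obtain ⟨hS, hcard, hcols, hshift⟩ := NFm_spec r k j hdec hrpos hk t ht b
  rw [phi_prodM]
  simp only [phiM]
  rw [dif_pos ⟨hS, by rw [hshift]; exact b.2.isLt, hcard⟩]
  refine congrArg (fun z => Pi.single z (1 : K)) ?_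
  refine Prod.ext ?_ ?_
  · apply Subtype.ext
    show (NFm r k j hdec hrpos hk t ht b).map (colFun r k j hk) = (b.1 : Multiset (Col k j))
    exact hcols
  · apply Fin.ext
    show shiftM r k (NFm r k j hdec hrpos hk t ht b) = (b.2 : ℕ)
    exact hshift

end
end HilbAux


open HilbAux

/-- The Hilbert function of the quotient by the primary component
`q_{λ,j} = I_λ + I_j`: for `t ≥ 1`,
`H(t) = r_j · C(t + k_1 + ... + k_j − 1, t)`.  In particular the scheme of `q_{λ,j}`
has projective dimension `k_1 + ... + k_j − 1` and degree `r_j`. -/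
theorem hilbertFunction_primary_component {K : Type*} [Field K] {ℓ : ℕ}
    (r k : Fin ℓ → ℕ) (lam : K)
    (hdec : StrictAnti r) (hrpos : ∀ i, 0 < r i) (hkpos : ∀ i, 0 < k i)
    (j : Fin ℓ) (t : ℕ) (ht : 1 ≤ t) :
    Module.finrank K
      (Submodule.map
        (Ideal.Quotient.mkₐ K (eigIdeal (jordanSingle K r k lam) ⊔ varIdeal K r k j)).toLinearMap
        (homogeneousSubmodule (Σ i : Fin ℓ, Fin (r i) × Fin (k i)) K t)) =
      r j * Nat.choose (t + (∑ i ∈ Finset.Iic j, k i) - 1) t := by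
  classical
  have hk : 0 < k j := hkpos j
  have hrj : 0 < r j := hrpos j
  show Module.finrank K
      (Submodule.map (Ideal.Quotient.mkₐ K (Ifull K r k j lam)).toLinearMap
        (homogeneousSubmodule (Var r k) K t)) =
      r j * Nat.choose (t + (∑ i ∈ Finset.Iic j, k i) - 1) t
  -- linear independence of the normal-form family
  have li : LinearIndependent K (fun b : Sym (Col k j) t × Fin (r j) =>
      Ideal.Quotient.mkₐ K (Ifull K r k j lam) (prodM K r k (NFm r k j hdec hrj hk t ht b))) := by
    rw [Fintype.linearIndependent_iff]
    intro g hg b0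
    have hmem : (∑ b, g b • prodM K r k (NFm r k j hdec hrj hk t ht b))
        ∈ Ifull K r k j lam := by
      have h0 : (Ideal.Quotient.mkₐ K (Ifull K r k j lam))
          (∑ b, g b • prodM K r k (NFm r k j hdec hrj hk t ht b)) = 0 := by
        rw [map_sum]
        simp only [map_smul]
        exact hg
      rwa [Ideal.Quotient.mkₐ_eq_mk, Ideal.Quotient.eq_zero_iff_mem] at h0
    have hphi := phi_vanish r k j hdec hk t lam hmem
    rw [map_sum] at hphi
    simp only [map_smul, phi_NF r k j hdec hrj hk t ht] at hphi
    have h2 := congrFun hphi b0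
    simp only [Finset.sum_apply, Pi.smul_apply, Pi.single_apply, smul_eq_mul, mul_ite,
      mul_one, mul_zero, Finset.sum_ite_eq, Finset.mem_univ, if_true, Pi.zero_apply] at h2
    exact h2
  -- span description of the degree-t part
  have hspan : Submodule.map (Ideal.Quotient.mkₐ K (Ifull K r k j lam)).toLinearMap
      (homogeneousSubmodule (Var r k) K t)
      = Submodule.span K (Set.range (fun b : Sym (Col k j) t × Fin (r j) =>
          Ideal.Quotient.mkₐ K (Ifull K r k j lam)
            (prodM K r k (NFm r k j hdec hrj hk t ht b)))) := by
    apply le_antisymm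
    · rintro x ⟨p, hp, rfl⟩
      have hp' : MvPolynomial.IsHomogeneous p t := hp
      rw [show (Ideal.Quotient.mkₐ K (Ifull K r k j lam)).toLinearMap p
          = Ideal.Quotient.mkₐ K (Ifull K r k j lam) p from rfl]
      have hrep : Ideal.Quotient.mkₐ K (Ifull K r k j lam) p
          = ∑ μ ∈ p.support, (coeff μ p) •
            Ideal.Quotient.mkₐ K (Ifull K r k j lam) (monomial μ 1) := by
        conv_lhs => rw [p.as_sum]
        rw [map_sum]
        refine Finset.sum_congr rfl fun μ _ => ?_
        rw [show (monomial μ) (coeff μ p) = (coeff μ p) • (monomial μ (1 : K)) by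
          rw [smul_monomial, smul_eq_mul, mul_one]]
        rw [map_smul]
      rw [hrep]
      refine Submodule.sum_mem _ fun μ hμ => Submodule.smul_mem _ _ ?_
      have hdeg : Multiset.card μ.toMultiset = t := by
        have h2 : (Finsupp.weight 1) μ = t := hp' (MvPolynomial.mem_support_iff.mp hμ)
        have h3 : Finsupp.degree μ = t := by
          rw [Finsupp.degree_eq_weight_one]
          exact h2
        rw [Finsupp.card_toMultiset]
        exact h3
      rw [show (monomial μ (1 : K)) = prodM K r k μ.toMultiset from (prodM_eqm r k μ).symm]
      by_cases hall : ∀ v ∈ μ.toMultiset, Surv r k j v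
      · by_cases hsh : shiftM r k μ.toMultiset < r j
        · obtain ⟨hS', hcard', hcols', hshift'⟩ := NFm_spec r k j hdec hrj hk t ht
            (⟨⟨μ.toMultiset.map (colFun r k j hk), by rw [Multiset.card_map, hdeg]⟩,
              ⟨shiftM r k μ.toMultiset, hsh⟩⟩)
          have hcong := congrSame r k j hdec lam hk t μ.toMultiset
            (NFm r k j hdec hrj hk t ht
              (⟨⟨μ.toMultiset.map (colFun r k j hk), by rw [Multiset.card_map, hdeg]⟩,
                ⟨shiftM r k μ.toMultiset, hsh⟩⟩))
            hdeg hall hS' hcols'.symm hshift'.symm hsh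
          have heq : Ideal.Quotient.mkₐ K (Ifull K r k j lam) (prodM K r k μ.toMultiset)
              = Ideal.Quotient.mkₐ K (Ifull K r k j lam)
                (prodM K r k (NFm r k j hdec hrj hk t ht
                  (⟨⟨μ.toMultiset.map (colFun r k j hk), by rw [Multiset.card_map, hdeg]⟩,
                    ⟨shiftM r k μ.toMultiset, hsh⟩⟩))) := by
            rw [Ideal.Quotient.mkₐ_eq_mk]
            exact Ideal.Quotient.eq.mpr hcong
          rw [heq]
          exact Submodule.subset_span ⟨_, rfl⟩
        · have hmem := killBig r k j hdec hrj lam μ.toMultiset hall (by omega)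
          have h0 : (Ideal.Quotient.mkₐ K (Ifull K r k j lam))
              (prodM K r k μ.toMultiset) = 0 := by
            rw [Ideal.Quotient.mkₐ_eq_mk, Ideal.Quotient.eq_zero_iff_mem]
            exact hmem
          rw [h0]
          exact zero_mem _
      · push_neg at hall
        obtain ⟨v, hvmem, hvdead⟩ := hall
        have hmem : prodM K r k μ.toMultiset ∈ Ifull K r k j lam := by
          rw [show prodM K r k μ.toMultiset
              = prodM K r k (μ.toMultiset.erase v) * X v from by
            conv_lhs => rw [← Multiset.cons_erase hvmem]
            rw [prodM_cons]
            ring]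
          exact Ideal.mul_mem_left _ _ (var_le r k j lam (X_mem_varIdeal r k j v hvdead))
        have h0 : (Ideal.Quotient.mkₐ K (Ifull K r k j lam))
            (prodM K r k μ.toMultiset) = 0 := by
          rw [Ideal.Quotient.mkₐ_eq_mk, Ideal.Quotient.eq_zero_iff_mem]
          exact hmem
        rw [h0]
        exact zero_mem _
    · rw [Submodule.span_le]
      rintro x ⟨b, rfl⟩
      have hb : prodM K r k (NFm r k j hdec hrj hk t ht b)
          ∈ homogeneousSubmodule (Var r k) K t := by
        rw [mem_homogeneousSubmodule, prodM_eq_monomial]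
        exact isHomogeneous_monomial _ (by
          rw [degree_toFinsupp]
          exact (NFm_spec r k j hdec hrj hk t ht b).2.1)
      exact ⟨_, hb, rfl⟩
  rw [hspan, finrank_span_eq_card li, Fintype.card_prod, Fintype.card_fin,
    Sym.card_sym_eq_multichoose, Nat.multichoose_eq]
  have hcol : Fintype.card (Col k j) = ∑ i ∈ Finset.Iic j, k i := by
    rw [Fintype.card_sigma]
    simp only [Fintype.card_fin]
    exact (Finset.sum_subtype (Finset.Iic j) (fun i => Finset.mem_Iic) k).symm
  rw [hcol, Nat.mul_comm, Nat.add_comm (∑ i ∈ Finset.Iic j, k i) t]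
end

section
/- The eigenscheme of a Jordan matrix with a single eigenvalue is non-degenerate: the saturation of the ideal I_λ with respect to the irrelevant maximal ideal contains no nonzero linear forms. -/
open MvPolynomial

lemma eig_aux_single_of_degree_one {σ : Type*} (d : σ →₀ ℕ)
    (h : Finsupp.degree d = 1) : ∃ k, d = Finsupp.single k 1 := by
  classical
  have hne : d.support.Nonempty := by
    rcases Finset.eq_empty_or_nonempty d.support with he | hne
    · exfalso; rw [Finsupp.support_eq_empty.mp he] at h; simp at h
    · exact hne
  obtain ⟨k, hk⟩ := hne
  refine ⟨k, ?_⟩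
  have hdk : 1 ≤ d k := Nat.one_le_iff_ne_zero.mpr (Finsupp.mem_support_iff.mp hk)
  have hsum : ∑ i ∈ d.support, d i = 1 := h
  have hothers : ∀ i ∈ d.support, i ≠ k → d i = 0 := by
    intro i hi hik
    by_contra hdi
    have h1i : 1 ≤ d i := Nat.one_le_iff_ne_zero.mpr hdi
    have h2 : 2 ≤ ∑ j ∈ d.support, d j := by
      have hsub : {i, k} ⊆ d.support := by
        intro x hx
        simp only [Finset.mem_insert, Finset.mem_singleton] at hx
        rcases hx with rfl | rfl
        · exact hi
        · exact hk
      have hpair : d i + d k ≤ ∑ j ∈ d.support, d j := by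
        have := Finset.sum_le_sum_of_subset (f := d) hsub
        rwa [Finset.sum_pair hik] at this
      omega
    omega
  have hdk1 : d k = 1 := by
    have heq : ∑ j ∈ d.support, d j = d k :=
      Finset.sum_eq_single k (fun i hi hik => hothers i hi hik)
        (fun h' => absurd hk h')
    omega
  ext i
  by_cases hik : i = k
  · subst hik; simp [hdk1]
  · have h0 : d i = 0 := by
      by_cases hi : i ∈ d.support
      · exact hothers i hi hik
      · simpa using (Finsupp.notMem_support_iff.mp hi)
    simp [h0, Finsupp.single_apply, Ne.symm hik]

/-- The eigenscheme of a Jordan matrix with a single eigenvalue is non-degenerate: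
the saturation of `I_λ` with respect to the irrelevant ideal `m = ⟨x_1,...,x_r⟩`
contains no nonzero linear forms. -/
theorem eigenscheme_jordan_single_eigenvalue_nondegenerate {K : Type*} [Field K] {r : ℕ}
    (lam : K) (J : Matrix (Fin r) (Fin r) K)
    (hdiag : ∀ i, J i i = lam)
    (hsup : ∀ i j : Fin r, (j : ℕ) = (i : ℕ) + 1 → J i j = 0 ∨ J i j = 1)
    (hoff : ∀ i j : Fin r, j ≠ i → (j : ℕ) ≠ (i : ℕ) + 1 → J i j = 0)
    (p : MvPolynomial (Fin r) K) (hp : p ∈ homogeneousSubmodule (Fin r) K 1)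
    (hsat : ∃ m : ℕ, ∀ q ∈ (Ideal.span (Set.range (X : Fin r → MvPolynomial (Fin r) K))) ^ m,
      q * p ∈ eigIdeal J) :
    p = 0 := by
  classical
  obtain ⟨m, hm⟩ := hsat
  set c : Fin r → K := fun j => coeff (Finsupp.single j 1) p with hc_def
  have hdecomp : p = ∑ j, C (c j) * X j := by
    apply MvPolynomial.ext
    intro d
    rw [MvPolynomial.coeff_sum]
    by_cases hd : ∃ k0 : Fin r, d = Finsupp.single k0 1
    · obtain ⟨k0, rfl⟩ := hd
      rw [Finset.sum_eq_single k0]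
      · simp [coeff_C_mul, coeff_X', hc_def]
      · intro j _ hj
        rw [coeff_C_mul, coeff_X', if_neg, mul_zero]
        exact fun h => hj (Finsupp.single_left_injective one_ne_zero h)
      · intro h; exact absurd (Finset.mem_univ k0) h
    · have hL : coeff d p = 0 := by
        by_contra hne
        refine hd (eig_aux_single_of_degree_one d ?_)
        rw [Finsupp.degree_eq_weight_one]
        exact hp hne
      rw [hL]
      refine (Finset.sum_eq_zero ?_).symm
      intro j _
      rw [coeff_C_mul, coeff_X', if_neg, mul_zero]
      exact fun h => hd ⟨j, h.symm⟩
  suffices hck : ∀ k : Fin r, c k = 0 by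
    rw [hdecomp]
    refine Finset.sum_eq_zero ?_
    intro j _
    rw [hck j, map_zero, zero_mul]
  intro k
  -- block boundaries
  have hkr : k.val < r := k.isLt
  set SA : Set ℕ := {a | a ≤ k.val ∧ ∀ j (h1 : j < r) (h2 : j + 1 < r),
      a ≤ j → j < k.val → J ⟨j, h1⟩ ⟨j + 1, h2⟩ ≠ 0} with hSA
  have hkSA : k.val ∈ SA := ⟨le_refl _, fun j _ _ h3 h4 => absurd h4 (by omega)⟩
  set a : ℕ := sInf SA with ha_def
  have haSA : a ∈ SA := Nat.sInf_mem ⟨k.val, hkSA⟩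
  have hak : a ≤ k.val := haSA.1
  have harun : ∀ j (h1 : j < r) (h2 : j + 1 < r), a ≤ j → j < k.val →
      J ⟨j, h1⟩ ⟨j + 1, h2⟩ ≠ 0 := haSA.2
  have haprev : ∀ (h0 : 0 < a) (h1 : a - 1 < r) (h2 : a < r), J ⟨a - 1, h1⟩ ⟨a, h2⟩ = 0 := by
    intro h0 h1 h2
    by_contra hne
    have hmem : a - 1 ∈ SA := by
      refine ⟨by omega, ?_⟩
      intro j hj1 hj2 hj3 hj4
      rcases Nat.eq_or_lt_of_le hj3 with heq | hlt
      · intro hzero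
        apply hne
        have e2 : (⟨j + 1, hj2⟩ : Fin r) = ⟨a, h2⟩ := Fin.ext (by simp; omega)
        have e1 : (⟨j, hj1⟩ : Fin r) = ⟨a - 1, h1⟩ := Fin.ext (by simp; omega)
        rw [e1, e2] at hzero
        exact hzero
      · exact harun j hj1 hj2 (by omega) hj4
    have := Nat.sInf_le hmem
    omega
  set SB : Set ℕ := {b | k.val ≤ b ∧ b < r ∧ ∀ (h1 : b < r) (h2 : b + 1 < r),
      J ⟨b, h1⟩ ⟨b + 1, h2⟩ = 0} with hSB
  have hr1SB : r - 1 ∈ SB := ⟨by omega, by omega, fun h1 h2 => absurd h2 (by omega)⟩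
  set b : ℕ := sInf SB with hb_def
  have hbSB : b ∈ SB := Nat.sInf_mem ⟨r - 1, hr1SB⟩
  have hkb : k.val ≤ b := hbSB.1
  have hbr : b < r := hbSB.2.1
  have hbrun : ∀ j (h1 : j < r) (h2 : j + 1 < r), k.val ≤ j → j < b →
      J ⟨j, h1⟩ ⟨j + 1, h2⟩ ≠ 0 := by
    intro j h1 h2 h3 h4 heq
    have hmem : j ∈ SB := ⟨h3, h1, fun h1' h2' => heq⟩
    have := Nat.sInf_le hmem
    omega
  have hrun : ∀ j (h1 : j < r) (h2 : j + 1 < r), a ≤ j → j < b →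
      J ⟨j, h1⟩ ⟨j + 1, h2⟩ = 1 := by
    intro j h1 h2 hj1 hj2
    have hne : J ⟨j, h1⟩ ⟨j + 1, h2⟩ ≠ 0 := by
      rcases lt_or_ge j k.val with hlt | hge
      · exact harun j h1 h2 hj1 hlt
      · exact hbrun j h1 h2 hge hj2
    rcases hsup ⟨j, h1⟩ ⟨j + 1, h2⟩ rfl with h | h
    · exact absurd h hne
    · exact h
  -- the evaluation map
  set f : Fin r → Polynomial (Polynomial K) := fun j =>
    if a ≤ j.val ∧ j.val ≤ b then
      Polynomial.C (Polynomial.X ^ (b - j.val)) * Polynomial.X ^ (j.val - a) else 0 with hf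
  set ℓ : ℕ := b - a + 1 with hℓ
  set τ : Fin r → Polynomial (Polynomial K) := fun i =>
    if h : i.val + 1 < r then
      algebraMap K (Polynomial (Polynomial K)) (J i ⟨i.val + 1, h⟩) * f ⟨i.val + 1, h⟩
    else 0 with hτ
  have hrow : ∀ i : Fin r,
      aeval f (∑ k', C (J i k') * X k')
        = algebraMap K (Polynomial (Polynomial K)) lam * f i + τ i := by
    intro i
    rw [map_sum]
    simp only [map_mul, aeval_C, aeval_X]
    by_cases h : i.val + 1 < r
    · have hne : i ≠ (⟨i.val + 1, h⟩ : Fin r) := Fin.ne_of_val_ne (by simp)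
      have hz : ∀ x ∈ Finset.univ, x ∉ ({i, ⟨i.val + 1, h⟩} : Finset (Fin r)) →
          algebraMap K (Polynomial (Polynomial K)) (J i x) * f x = 0 := by
        intro x _ hx
        simp only [Finset.mem_insert, Finset.mem_singleton] at hx
        push_neg at hx
        rw [hoff i x hx.1 (fun hv => hx.2 (Fin.ext hv)), map_zero, zero_mul]
      rw [← Finset.sum_subset (Finset.subset_univ _) hz, Finset.sum_pair hne, hdiag i]
      simp only [hτ]
      rw [dif_pos h]
    · rw [Finset.sum_eq_single i ?_ (fun hni => absurd (Finset.mem_univ i) hni)]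
      · rw [hdiag i]
        simp only [hτ]
        rw [dif_neg h, add_zero]
      · intro x _ hx
        have hxr : x.val < r := x.isLt
        rw [hoff i x hx (by omega), map_zero, zero_mul]
  set G : Fin r → Fin r → Polynomial (Polynomial K) := fun i j =>
    if a ≤ i.val ∧ i.val < b ∧ a ≤ j.val ∧ j.val ≤ b then
      Polynomial.C (Polynomial.X ^ (b - (i.val + 1) + (b - j.val))) *
        Polynomial.X ^ (i.val + 1 - a + (j.val - a)) else 0 with hGdef
  have hG : ∀ i j : Fin r, τ i * f j = G i j := by
    intro i j
    by_cases hcond : a ≤ i.val ∧ i.val < b ∧ a ≤ j.val ∧ j.val ≤ b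
    · obtain ⟨h1, h2, h3, h4⟩ := hcond
      have hir : i.val + 1 < r := by omega
      have hJ1 : J i ⟨i.val + 1, hir⟩ = 1 := hrun i.val i.isLt hir h1 h2
      simp only [hτ, hGdef, hf, dif_pos hir]
      rw [hJ1, map_one, one_mul]
      rw [if_pos (⟨by simp; omega, by simp; omega⟩ : a ≤ (⟨i.val + 1, hir⟩ : Fin r).val ∧
        (⟨i.val + 1, hir⟩ : Fin r).val ≤ b)]
      rw [if_pos (⟨h3, h4⟩ : a ≤ j.val ∧ j.val ≤ b)]
      rw [if_pos (⟨h1, h2, h3, h4⟩ : a ≤ i.val ∧ i.val < b ∧ a ≤ j.val ∧ j.val ≤ b)]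
      rw [mul_mul_mul_comm, ← Polynomial.C_mul, ← pow_add, ← pow_add]
    · have hG0 : G i j = 0 := by simp only [hGdef]; rw [if_neg hcond]
      rw [hG0]
      by_cases hfj : a ≤ j.val ∧ j.val ≤ b
      · by_cases hir : i.val + 1 < r
        · simp only [hτ, dif_pos hir]
          by_cases hfi : a ≤ i.val + 1 ∧ i.val + 1 ≤ b
          · have h5 : ¬(a ≤ i.val) := fun h => hcond ⟨h, by omega, hfj⟩
            have h0 : 0 < a := by omega
            have hzero : J i ⟨i.val + 1, hir⟩ = 0 := by
              have pa : a < r := lt_of_le_of_lt hak hkr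
              have pa1 : a - 1 < r := lt_of_le_of_lt (Nat.sub_le a 1) pa
              have e2 : (⟨i.val + 1, hir⟩ : Fin r) = ⟨a, pa⟩ := Fin.ext (by simp; omega)
              have e1 : i = ⟨a - 1, pa1⟩ := Fin.ext (by simp; omega)
              rw [e2, e1]
              exact haprev h0 pa1 pa
            rw [hzero, map_zero, zero_mul, zero_mul]
          · have hfi' : ¬(a ≤ (⟨i.val + 1, hir⟩ : Fin r).val ∧ (⟨i.val + 1, hir⟩ : Fin r).val ≤ b) := hfi
            simp only [hf]
            rw [if_neg hfi', mul_zero, zero_mul]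
        · simp only [hτ, dif_neg hir]
          rw [zero_mul]
      · simp only [hf]
        rw [if_neg hfj, mul_zero]
  have hGmem : ∀ i j : Fin r,
      G i j - G j i ∈ Ideal.span {(Polynomial.X : Polynomial (Polynomial K)) ^ ℓ} := by
    intro i j
    by_cases c1 : a ≤ i.val ∧ i.val < b ∧ a ≤ j.val ∧ j.val ≤ b
    · by_cases c2 : a ≤ j.val ∧ j.val < b ∧ a ≤ i.val ∧ i.val ≤ b
      · have hGij : G i j = G j i := by
          simp only [hGdef]
          rw [if_pos c1, if_pos c2]
          obtain ⟨d1, d2, d3, d4⟩ := c1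
          obtain ⟨e1, e2, e3, e4⟩ := c2
          have q1 : b - (i.val + 1) + (b - j.val) = b - (j.val + 1) + (b - i.val) := by omega
          have q2 : i.val + 1 - a + (j.val - a) = j.val + 1 - a + (i.val - a) := by omega
          rw [q1, q2]
        rw [hGij, sub_self]
        exact Ideal.zero_mem _
      · obtain ⟨d1, d2, d3, d4⟩ := id c1
        have hjb : j.val = b := by
          by_contra hne
          exact c2 ⟨d3, by omega, d1, by omega⟩
        have hGji : G j i = 0 := by simp only [hGdef]; rw [if_neg c2]
        have hGij : G i j = Polynomial.C (Polynomial.X ^ (b - (i.val + 1) + (b - j.val))) *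
            Polynomial.X ^ (i.val + 1 - a + (j.val - a)) := by
          simp only [hGdef]; rw [if_pos c1]
        rw [hGji, hGij, sub_zero]
        refine Ideal.mem_span_singleton.mpr (Dvd.dvd.mul_left ?_ _)
        exact pow_dvd_pow _ (by omega)
    · by_cases c2 : a ≤ j.val ∧ j.val < b ∧ a ≤ i.val ∧ i.val ≤ b
      · obtain ⟨d1, d2, d3, d4⟩ := id c2
        have hib : i.val = b := by
          by_contra hne
          exact c1 ⟨d3, by omega, d1, by omega⟩
        have hGij : G i j = 0 := by simp only [hGdef]; rw [if_neg c1]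
        have hGji : G j i = Polynomial.C (Polynomial.X ^ (b - (j.val + 1) + (b - i.val))) *
            Polynomial.X ^ (j.val + 1 - a + (i.val - a)) := by
          simp only [hGdef]; rw [if_pos c2]
        rw [hGij, hGji, zero_sub]
        exact neg_mem (Ideal.mem_span_singleton.mpr
          (Dvd.dvd.mul_left (pow_dvd_pow _ (by omega)) _))
      · have hGij : G i j = 0 := by simp only [hGdef]; rw [if_neg c1]
        have hGji : G j i = 0 := by simp only [hGdef]; rw [if_neg c2]
        rw [hGij, hGji, sub_zero]
        exact Ideal.zero_mem _
  have hker : ∀ u ∈ eigIdeal J,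
      aeval f u ∈ Ideal.span {(Polynomial.X : Polynomial (Polynomial K)) ^ ℓ} := by
    intro u hu
    have hle : eigIdeal J ≤ Ideal.comap (aeval f)
        (Ideal.span {(Polynomial.X : Polynomial (Polynomial K)) ^ ℓ}) := by
      rw [eigIdeal]
      refine Ideal.span_le.mpr ?_
      rintro u' ⟨i, j, rfl⟩
      rw [SetLike.mem_coe, Ideal.mem_comap]
      have heval : aeval f ((∑ k', C (J i k') * X k') * X j - (∑ k', C (J j k') * X k') * X i)
          = τ i * f j - τ j * f i := by
        rw [map_sub, map_mul, map_mul, aeval_X, aeval_X, hrow i, hrow j]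
        ring
      rw [heval, hG i j, hG j i]
      exact hGmem i j
    exact hle hu
  -- apply saturation hypothesis with q = X_a ^ m
  have haFin : a < r := lt_of_le_of_lt hak hkr
  have hXa : (X (⟨a, haFin⟩ : Fin r) : MvPolynomial (Fin r) K) ^ m ∈
      (Ideal.span (Set.range (X : Fin r → MvPolynomial (Fin r) K))) ^ m :=
    Ideal.pow_mem_pow (Ideal.subset_span (Set.mem_range_self _)) m
  have h1 := hm _ hXa
  have h2 := hker _ h1
  rw [map_mul, map_pow, aeval_X] at h2
  have hfa : f ⟨a, haFin⟩ = Polynomial.C (Polynomial.X ^ (b - a)) := by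
    simp only [hf]
    have hcA : a ≤ (⟨a, haFin⟩ : Fin r).val ∧ (⟨a, haFin⟩ : Fin r).val ≤ b := by
      constructor <;> simp <;> omega
    rw [if_pos hcA]
    simp
  rw [hfa, hdecomp, map_sum] at h2
  simp only [map_mul, aeval_C, aeval_X] at h2
  rw [Ideal.mem_span_singleton, Polynomial.X_pow_dvd_iff] at h2
  have h3 := h2 (k.val - a) (by omega)
  rw [← Polynomial.C_pow, Polynomial.coeff_C_mul, Polynomial.finset_sum_coeff] at h3
  have hsum : ∑ j : Fin r,
      (algebraMap K (Polynomial (Polynomial K)) (c j) * f j).coeff (k.val - a)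
      = algebraMap K (Polynomial K) (c k) * Polynomial.X ^ (b - k.val) := by
    rw [Finset.sum_eq_single k]
    · simp only [hf]
      rw [if_pos (⟨hak, hkb⟩ : a ≤ (k : Fin r).val ∧ (k : Fin r).val ≤ b)]
      rw [Polynomial.algebraMap_apply, ← mul_assoc, ← Polynomial.C_mul,
        Polynomial.coeff_C_mul, Polynomial.coeff_X_pow, if_pos rfl, mul_one]
    · intro j _ hjk
      have hjkv : j.val ≠ k.val := Fin.val_ne_of_ne hjk
      by_cases hfj : a ≤ j.val ∧ j.val ≤ b
      · simp only [hf]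
        rw [if_pos (hfj : a ≤ (j : Fin r).val ∧ (j : Fin r).val ≤ b)]
        rw [Polynomial.algebraMap_apply, ← mul_assoc, ← Polynomial.C_mul,
          Polynomial.coeff_C_mul, Polynomial.coeff_X_pow, if_neg (by omega), mul_zero]
      · simp only [hf]
        rw [if_neg hfj, mul_zero, Polynomial.coeff_zero]
    · intro h; exact absurd (Finset.mem_univ k) h
  rw [hsum] at h3
  rcases mul_eq_zero.mp h3 with h4 | h4
  · exact absurd h4 (pow_ne_zero _ (pow_ne_zero _ Polynomial.X_ne_zero))
  · rcases mul_eq_zero.mp h4 with h5 | h5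
    · exact (map_eq_zero_iff _ (algebraMap K (Polynomial K)).injective).mp h5
    · exact absurd h5 (pow_ne_zero _ Polynomial.X_ne_zero)
end

section
/- Let A be an r×r matrix over K with a single eigenvalue λ ∈ K. Then A is diagonalizable (i.e., A = λI) if and only if the ideal I_A of 2×2 minors of (Ax | x) is a radical ideal. -/
open MvPolynomial

section Aux

variable {K : Type*} [Field K] {r : ℕ}

/-- The `i`-th entry of `M x` as a linear polynomial. -/
noncomputable def lrow (M : Matrix (Fin r) (Fin r) K) (i : Fin r) :
    MvPolynomial (Fin r) K := ∑ k, C (M i k) * X k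

lemma lrow_sub_smul_one (A : Matrix (Fin r) (Fin r) K) (lam : K) (a : Fin r) :
    (∑ k, C (A a k) * X k) = lrow (A - lam • 1) a + C lam * X a := by
  unfold lrow
  have h1 : ∀ k, C ((A - lam • 1) a k) * X k
      = C (A a k) * X k - C lam * (if k = a then X k else 0) := by
    intro k
    by_cases h : k = a
    · subst h
      simp [Matrix.sub_apply, Matrix.smul_apply, Matrix.one_apply_eq, sub_mul, map_sub]
    · have h' : ¬a = k := fun hh => h hh.symm
      simp [Matrix.sub_apply, Matrix.smul_apply, Matrix.one_apply, h, h']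
  simp only [h1, Finset.sum_sub_distrib, ← Finset.mul_sum,
    Finset.sum_ite_eq' Finset.univ a (fun k => X k), Finset.mem_univ, if_true]
  ring

lemma gen_mem (A : Matrix (Fin r) (Fin r) K) (lam : K) (i j : Fin r) :
    lrow (A - lam • 1) i * X j - lrow (A - lam • 1) j * X i ∈ eigIdeal A := by
  have hp : (∑ k, C (A i k) * X k) * X j - (∑ k, C (A j k) * X k) * X i ∈ eigIdeal A :=
    Ideal.subset_span ⟨i, j, rfl⟩
  rw [lrow_sub_smul_one A lam i, lrow_sub_smul_one A lam j] at hp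
  have e : lrow (A - lam • 1) i * X j - lrow (A - lam • 1) j * X i
      = (lrow (A - lam • 1) i + C lam * X i) * X j
        - (lrow (A - lam • 1) j + C lam * X j) * X i := by ring
  rw [e]; exact hp

lemma lrow_mul (M N : Matrix (Fin r) (Fin r) K) (i : Fin r) :
    lrow (M * N) i = ∑ k, C (M i k) * lrow N k := by
  unfold lrow
  simp only [Matrix.mul_apply, map_sum, Finset.sum_mul, Finset.mul_sum, mul_assoc, map_mul]
  rw [Finset.sum_comm]

lemma sub_lemma (A : Matrix (Fin r) (Fin r) K) (lam : K) (a b : Fin r) :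
    (∑ k, C ((A - lam • 1) a k) * lrow (A - lam • 1) k) * X b
      - lrow (A - lam • 1) a * lrow (A - lam • 1) b ∈ eigIdeal A := by
  have e : (∑ k, C ((A - lam • 1) a k) * lrow (A - lam • 1) k) * X b
      - lrow (A - lam • 1) a * lrow (A - lam • 1) b
      = ∑ k, C ((A - lam • 1) a k)
          * (lrow (A - lam • 1) k * X b - lrow (A - lam • 1) b * X k) := by
    rw [Finset.sum_mul]
    conv_lhs =>
      rw [show lrow (A - lam • 1) a = ∑ k, C ((A - lam • 1) a k) * X k from rfl,
        Finset.sum_mul]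
    rw [← Finset.sum_sub_distrib]
    exact Finset.sum_congr rfl fun k _ => by ring
  rw [e]
  exact Ideal.sum_mem _ fun k _ => Ideal.mul_mem_left _ _ (gen_mem A lam k b)

lemma key_lemma (A : Matrix (Fin r) (Fin r) K) (lam : K) (m : ℕ) (i j : Fin r) :
    lrow ((A - lam • 1) ^ (m + 1)) i * X j ^ m
      - lrow (A - lam • 1) i * lrow (A - lam • 1) j ^ m ∈ eigIdeal A := by
  induction m generalizing i j with
  | zero => simp
  | succ m ih =>
    have hd : lrow ((A - lam • 1) ^ (m + 1 + 1)) i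
        = ∑ k, C ((A - lam • 1) i k) * lrow ((A - lam • 1) ^ (m + 1)) k := by
      rw [pow_succ' (A - lam • 1) (m + 1)]
      exact lrow_mul _ _ _
    have h1 : lrow ((A - lam • 1) ^ (m + 1 + 1)) i * X j ^ (m + 1)
        - (∑ k, C ((A - lam • 1) i k) * lrow (A - lam • 1) k)
            * lrow (A - lam • 1) j ^ m * X j
        = ∑ k, (C ((A - lam • 1) i k) * X j)
            * (lrow ((A - lam • 1) ^ (m + 1)) k * X j ^ m
              - lrow (A - lam • 1) k * lrow (A - lam • 1) j ^ m) := by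
      rw [hd, Finset.sum_mul, Finset.sum_mul, Finset.sum_mul, ← Finset.sum_sub_distrib]
      refine Finset.sum_congr rfl fun k _ => by ring
    have m1 : lrow ((A - lam • 1) ^ (m + 1 + 1)) i * X j ^ (m + 1)
        - (∑ k, C ((A - lam • 1) i k) * lrow (A - lam • 1) k)
            * lrow (A - lam • 1) j ^ m * X j ∈ eigIdeal A := by
      rw [h1]
      exact Ideal.sum_mem _ fun k _ => Ideal.mul_mem_left _ _ (ih k j)
    have m2 : (∑ k, C ((A - lam • 1) i k) * lrow (A - lam • 1) k)
            * lrow (A - lam • 1) j ^ m * X j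
        - lrow (A - lam • 1) i * lrow (A - lam • 1) j ^ (m + 1) ∈ eigIdeal A := by
      have e : (∑ k, C ((A - lam • 1) i k) * lrow (A - lam • 1) k)
            * lrow (A - lam • 1) j ^ m * X j
          - lrow (A - lam • 1) i * lrow (A - lam • 1) j ^ (m + 1)
          = lrow (A - lam • 1) j ^ m
            * ((∑ k, C ((A - lam • 1) i k) * lrow (A - lam • 1) k) * X j
              - lrow (A - lam • 1) i * lrow (A - lam • 1) j) := by
        ring
      rw [e]
      exact Ideal.mul_mem_left _ _ (sub_lemma A lam i j)
    have h := Ideal.add_mem _ m1 m2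
    rw [sub_add_sub_cancel] at h
    exact h

/-- Elements of `eigIdeal A` vanish at 0 together with all first partial derivatives. -/
lemma mem_eigIdeal_deriv (A : Matrix (Fin r) (Fin r) K) {f : MvPolynomial (Fin r) K}
    (hf : f ∈ eigIdeal A) :
    eval (0 : Fin r → K) f = 0 ∧ ∀ k, eval (0 : Fin r → K) (pderiv k f) = 0 := by
  refine Submodule.span_induction ?_ ?_ ?_ ?_ hf
  · rintro x ⟨i, j, rfl⟩
    constructor
    · simp
    · intro k
      simp [pderiv_mul]
  · simp
  · rintro x y - - ⟨hx0, hx1⟩ ⟨hy0, hy1⟩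
    refine ⟨?_, fun k => ?_⟩
    · rw [map_add, hx0, hy0, add_zero]
    · rw [map_add, map_add, hx1 k, hy1 k, add_zero]
  · rintro a x - ⟨hx0, hx1⟩
    refine ⟨?_, fun k => ?_⟩
    · rw [smul_eq_mul, map_mul, hx0, mul_zero]
    · rw [smul_eq_mul, pderiv_mul, map_add, map_mul, map_mul, hx0, hx1 k,
        mul_zero, mul_zero, add_zero]

end Aux

/-- A matrix with a single eigenvalue `λ ∈ K` is diagonalizable (i.e. `A = λ•1`)
if and only if its eigenscheme ideal `I_A` is radical. -/
theorem diagonalizable_iff_radical_single_eigenvalue {K : Type*} [Field K] {r : ℕ}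
    (A : Matrix (Fin r) (Fin r) K) (lam : K)
    (hchar : A.charpoly = (Polynomial.X - Polynomial.C lam) ^ r) :
    A = lam • (1 : Matrix (Fin r) (Fin r) K) ↔ (eigIdeal A).IsRadical := by
  constructor
  · intro hA
    have hbot : eigIdeal A = ⊥ := by
      refine le_antisymm ?_ bot_le
      rw [eigIdeal, Ideal.span_le]
      rintro p ⟨i, j, rfl⟩
      have h : ∀ a : Fin r, (∑ k, C (A a k) * X k) = C lam * X a := by
        intro a
        rw [lrow_sub_smul_one A lam a, hA]
        simp [lrow]
      simp only [SetLike.mem_coe, Ideal.mem_bot, h i, h j]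
      ring
    rw [hbot]
    exact Ideal.isRadical_bot_of_noZeroDivisors
  · intro hrad
    rcases Nat.eq_zero_or_pos r with hr | hr
    · subst hr; exact Subsingleton.elim _ _
    have hnil : (A - lam • 1) ^ r = 0 := by
      have h := Matrix.aeval_self_charpoly A
      rw [hchar] at h
      simpa [map_pow, map_sub, Polynomial.aeval_X, Polynomial.aeval_C,
        Algebra.algebraMap_eq_smul_one] using h
    have hy : ∀ i, lrow (A - lam • 1) i ∈ eigIdeal A := by
      intro i
      apply hrad
      refine ⟨r, ?_⟩
      have hk := key_lemma A lam (r - 1) i i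
      rw [Nat.sub_add_cancel hr, hnil] at hk
      have h0 : lrow (0 : Matrix (Fin r) (Fin r) K) i = 0 := by simp [lrow]
      rw [h0, zero_mul, zero_sub] at hk
      have hx : lrow (A - lam • 1) i * lrow (A - lam • 1) i ^ (r - 1) ∈ eigIdeal A := by
        simpa using (eigIdeal A).neg_mem hk
      have e : lrow (A - lam • 1) i * lrow (A - lam • 1) i ^ (r - 1)
          = lrow (A - lam • 1) i ^ r := by
        rw [← pow_succ', Nat.sub_add_cancel hr]
      rw [← e]
      exact hx
    have hN0 : A - lam • 1 = 0 := by
      ext i k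
      have h := (mem_eigIdeal_deriv A (hy i)).2 k
      have hpd : pderiv k (lrow (A - lam • 1) i) = C ((A - lam • 1) i k) := by
        unfold lrow
        rw [map_sum, Finset.sum_eq_single k]
        · simp [pderiv_mul, Pi.single_apply]
        · intro l _ hl
          simp [pderiv_mul, Pi.single_apply, hl]
        · simp
      rw [hpd] at h
      simpa using h
    rw [sub_eq_zero] at hN0
    exact hN0
end

section
/- Let A and B be square matrices of sizes r and s. If the rs linear forms A[α,:]x·y_β − B[β,:]y·x_α (for 1 ≤ α ≤ r, 1 ≤ β ≤ s) span the full rs-dimensional space of bidegree (1,1) forms, then I_{A⊕B} = ⟨L_A, y_1,...,y_s⟩ ∩ ⟨L_B, x_1,...,x_r⟩. -/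
open MvPolynomial

lemma aux_aeval_monomial_self {K σ : Type*} [CommSemiring K]
    (g : σ → MvPolynomial σ K) (u : σ →₀ ℕ) (a : K)
    (h : ∀ n ∈ u.support, g n = X n) :
    aeval g (monomial u a) = monomial u a := by
  rw [aeval_monomial, monomial_eq, algebraMap_eq]
  congr 1
  exact Finset.prod_congr rfl fun n hn => by simp only []; rw [h n hn]

lemma aux_aeval_monomial_zero {K σ : Type*} [CommSemiring K]
    (g : σ → MvPolynomial σ K) (u : σ →₀ ℕ) (a : K) (n : σ)
    (hn : n ∈ u.support) (hg : g n = 0) :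
    aeval g (monomial u a) = 0 := by
  rw [aeval_monomial, Finsupp.prod,
    Finset.prod_eq_zero hn (by rw [hg]; exact zero_pow (Finsupp.mem_support_iff.mp hn)), mul_zero]

lemma aux_T_mem {K : Type*} [Field K] {r s : ℕ} (f : MvPolynomial (Fin r ⊕ Fin s) K) :
    f - aeval (Sum.elim (fun i => X (Sum.inl i)) fun _ => 0) f
      - aeval (Sum.elim (fun _ => 0) fun j => X (Sum.inr j)) f
      + aeval (fun _ => 0) f
      ∈ Ideal.span {p : MvPolynomial (Fin r ⊕ Fin s) K | ∃ i j, p = X (Sum.inl i) * X (Sum.inr j)} := by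
  induction f using MvPolynomial.induction_on' with
  | add p q hp hq =>
    convert Ideal.add_mem _ hp hq using 1
    simp only [map_add]; ring
  | monomial u a =>
    by_cases h0 : u = 0
    · subst h0
      simp only [monomial_zero', aeval_C, algebraMap_eq]
      convert Ideal.zero_mem _ using 1; ring
    · have hq0 : aeval (fun _ => (0 : MvPolynomial (Fin r ⊕ Fin s) K)) (monomial u a) = 0 := by
        obtain ⟨n, hn⟩ := Finsupp.support_nonempty_iff.mpr h0
        exact aux_aeval_monomial_zero _ u a n hn rfl
      by_cases hy : ∀ j : Fin s, u (Sum.inr j) = 0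
      · have h1 : aeval (Sum.elim (fun i => X (Sum.inl i)) fun _ => (0 : MvPolynomial (Fin r ⊕ Fin s) K)) (monomial u a) = monomial u a := by
          refine aux_aeval_monomial_self _ u a fun n hn => ?_
          cases n with
          | inl i => rfl
          | inr j => exact absurd (hy j) (Finsupp.mem_support_iff.mp hn)
        have h2 : aeval (Sum.elim (fun _ => (0 : MvPolynomial (Fin r ⊕ Fin s) K)) fun j => X (Sum.inr j)) (monomial u a) = 0 := by
          obtain ⟨n, hn⟩ := Finsupp.support_nonempty_iff.mpr h0
          cases n with
          | inl i => exact aux_aeval_monomial_zero _ u a (Sum.inl i) hn rfl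
          | inr j => exact absurd (hy j) (Finsupp.mem_support_iff.mp hn)
        rw [h1, h2, hq0]
        convert Ideal.zero_mem _ using 1; ring
      · push_neg at hy
        obtain ⟨j, hj⟩ := hy
        have hjs : Sum.inr j ∈ u.support := Finsupp.mem_support_iff.mpr hj
        have h1 : aeval (Sum.elim (fun i => X (Sum.inl i)) fun _ => (0 : MvPolynomial (Fin r ⊕ Fin s) K)) (monomial u a) = 0 :=
          aux_aeval_monomial_zero _ u a (Sum.inr j) hjs rfl
        by_cases hx : ∀ i : Fin r, u (Sum.inl i) = 0
        · have h2 : aeval (Sum.elim (fun _ => (0 : MvPolynomial (Fin r ⊕ Fin s) K)) fun j => X (Sum.inr j)) (monomial u a) = monomial u a := by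
            refine aux_aeval_monomial_self _ u a fun n hn => ?_
            cases n with
            | inl i => exact absurd (hx i) (Finsupp.mem_support_iff.mp hn)
            | inr j' => rfl
          rw [h1, h2, hq0]
          convert Ideal.zero_mem _ using 1; ring
        · push_neg at hx
          obtain ⟨i, hi⟩ := hx
          have h2 : aeval (Sum.elim (fun _ => (0 : MvPolynomial (Fin r ⊕ Fin s) K)) fun j => X (Sum.inr j)) (monomial u a) = 0 :=
            aux_aeval_monomial_zero _ u a (Sum.inl i) (Finsupp.mem_support_iff.mpr hi) rfl
          rw [h1, h2, hq0]
          rw [sub_zero, sub_zero, add_zero]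
          have key : monomial u a =
              monomial (u - Finsupp.single (Sum.inl i) 1 - Finsupp.single (Sum.inr j) 1) a *
                (X (Sum.inl i) * X (Sum.inr j)) := by
            have hu : (u - Finsupp.single (Sum.inl i) 1 - Finsupp.single (Sum.inr j) 1) +
                (Finsupp.single (Sum.inl i) 1 + Finsupp.single (Sum.inr j) 1) = u := by
              ext v
              simp only [Finsupp.add_apply, Finsupp.tsub_apply, Finsupp.single_apply]
              split_ifs with ha hb <;>
                [exact absurd (ha.trans hb.symm) Sum.inl_ne_inr;
                 (subst ha; omega); (rename_i hb; subst hb; omega); omega]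
            rw [X, X, monomial_mul, monomial_mul, mul_one, mul_one, hu]
          rw [key]
          exact Ideal.mul_mem_left _ _ (Ideal.subset_span ⟨i, j, rfl⟩)


/-- If the `rs` bidegree `(1,1)` forms `A[α,:]x·y_β − B[β,:]y·x_α` span the full space
of bidegree `(1,1)` forms, then `I_{A⊕B} = ⟨L_A, y⟩ ∩ ⟨L_B, x⟩`. -/
theorem eigIdeal_directSum {K : Type*} [Field K] {r s : ℕ}
    (A : Matrix (Fin r) (Fin r) K) (B : Matrix (Fin s) (Fin s) K)
    (Ax : Fin r → MvPolynomial (Fin r ⊕ Fin s) K)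
    (By : Fin s → MvPolynomial (Fin r ⊕ Fin s) K)
    (hAx : ∀ α, Ax α = ∑ k, C (A α k) * X (Sum.inl k))
    (hBy : ∀ β, By β = ∑ k, C (B β k) * X (Sum.inr k))
    (hspan : Submodule.span K
        {p : MvPolynomial (Fin r ⊕ Fin s) K | ∃ α β, p = Ax α * X (Sum.inr β) - By β * X (Sum.inl α)} =
      Submodule.span K
        {p : MvPolynomial (Fin r ⊕ Fin s) K | ∃ i j, p = X (Sum.inl i) * X (Sum.inr j)}) :
    eigIdeal (Matrix.fromBlocks A 0 0 B) =
      (Ideal.span {p | ∃ i j : Fin r, p = Ax i * X (Sum.inl j) - Ax j * X (Sum.inl i)} ⊔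
        Ideal.span {p : MvPolynomial (Fin r ⊕ Fin s) K | ∃ β : Fin s, p = X (Sum.inr β)}) ⊓
      (Ideal.span {p | ∃ i j : Fin s, p = By i * X (Sum.inr j) - By j * X (Sum.inr i)} ⊔
        Ideal.span {p : MvPolynomial (Fin r ⊕ Fin s) K | ∃ α : Fin r, p = X (Sum.inl α)}) := by
  classical
  have hL : ∀ i : Fin r ⊕ Fin s,
      (∑ k, C (Matrix.fromBlocks A 0 0 B i k) * X k : MvPolynomial (Fin r ⊕ Fin s) K)
        = Sum.elim Ax By i := by
    intro i
    cases i with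
    | inl a =>
      rw [Fintype.sum_sum_type]
      simp [hAx a, Matrix.fromBlocks_apply₁₁, Matrix.fromBlocks_apply₁₂]
    | inr b =>
      rw [Fintype.sum_sum_type]
      simp [hBy b, Matrix.fromBlocks_apply₂₁, Matrix.fromBlocks_apply₂₂]
  have hEig : eigIdeal (Matrix.fromBlocks A 0 0 B) =
      Ideal.span {p : MvPolynomial (Fin r ⊕ Fin s) K | ∃ i j,
        p = Sum.elim Ax By i * X j - Sum.elim Ax By j * X i} := by
    unfold eigIdeal
    apply congrArg Ideal.span
    ext p
    constructor
    · rintro ⟨i, j, rfl⟩; exact ⟨i, j, by rw [hL, hL]⟩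
    · rintro ⟨i, j, rfl⟩; exact ⟨i, j, by rw [hL, hL]⟩
  rw [hEig]
  -- membership helpers
  have hXmem : ∀ α : Fin r, (X (Sum.inl α) : MvPolynomial (Fin r ⊕ Fin s) K) ∈
      Ideal.span {p : MvPolynomial (Fin r ⊕ Fin s) K | ∃ α : Fin r, p = X (Sum.inl α)} :=
    fun α => Ideal.subset_span ⟨α, rfl⟩
  have hYmem : ∀ β : Fin s, (X (Sum.inr β) : MvPolynomial (Fin r ⊕ Fin s) K) ∈
      Ideal.span {p : MvPolynomial (Fin r ⊕ Fin s) K | ∃ β : Fin s, p = X (Sum.inr β)} :=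
    fun β => Ideal.subset_span ⟨β, rfl⟩
  have hAxX : ∀ α, Ax α ∈
      Ideal.span {p : MvPolynomial (Fin r ⊕ Fin s) K | ∃ α : Fin r, p = X (Sum.inl α)} := by
    intro α
    rw [hAx]
    exact Ideal.sum_mem _ fun k _ => Ideal.mul_mem_left _ _ (hXmem k)
  have hByY : ∀ β, By β ∈
      Ideal.span {p : MvPolynomial (Fin r ⊕ Fin s) K | ∃ β : Fin s, p = X (Sum.inr β)} := by
    intro β
    rw [hBy]
    exact Ideal.sum_mem _ fun k _ => Ideal.mul_mem_left _ _ (hYmem k)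
  apply le_antisymm
  · refine Ideal.span_le.mpr ?_
    rintro p ⟨i, j, rfl⟩
    rw [SetLike.mem_coe, Submodule.mem_inf]
    cases i with
    | inl a =>
      cases j with
      | inl b =>
        simp only [Sum.elim_inl]
        exact ⟨Ideal.mem_sup_left (Ideal.subset_span ⟨a, b, rfl⟩),
          Ideal.mem_sup_right (sub_mem (Ideal.mul_mem_left _ _ (hXmem b))
            (Ideal.mul_mem_left _ _ (hXmem a)))⟩
      | inr b =>
        simp only [Sum.elim_inl, Sum.elim_inr]
        exact ⟨Ideal.mem_sup_right (sub_mem (Ideal.mul_mem_left _ _ (hYmem b))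
            (Ideal.mul_mem_right _ _ (hByY b))),
          Ideal.mem_sup_right (sub_mem (Ideal.mul_mem_right _ _ (hAxX a))
            (Ideal.mul_mem_left _ _ (hXmem a)))⟩
    | inr a =>
      cases j with
      | inl b =>
        simp only [Sum.elim_inl, Sum.elim_inr]
        exact ⟨Ideal.mem_sup_right (sub_mem (Ideal.mul_mem_right _ _ (hByY a))
            (Ideal.mul_mem_left _ _ (hYmem a))),
          Ideal.mem_sup_right (sub_mem (Ideal.mul_mem_left _ _ (hXmem b))
            (Ideal.mul_mem_right _ _ (hAxX b)))⟩
      | inr b =>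
        simp only [Sum.elim_inr]
        exact ⟨Ideal.mem_sup_right (sub_mem (Ideal.mul_mem_left _ _ (hYmem b))
            (Ideal.mul_mem_left _ _ (hYmem a))),
          Ideal.mem_sup_left (Ideal.subset_span ⟨a, b, rfl⟩)⟩
  · intro f hf
    rw [Submodule.mem_inf] at hf
    obtain ⟨hf1, hf2⟩ := hf
    set I : Ideal (MvPolynomial (Fin r ⊕ Fin s) K) :=
      Ideal.span {p : MvPolynomial (Fin r ⊕ Fin s) K | ∃ i j,
        p = Sum.elim Ax By i * X j - Sum.elim Ax By j * X i} with hI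
    have hJAle : Ideal.span {p : MvPolynomial (Fin r ⊕ Fin s) K |
        ∃ i j : Fin r, p = Ax i * X (Sum.inl j) - Ax j * X (Sum.inl i)} ≤ I := by
      refine Ideal.span_le.mpr ?_
      rintro p ⟨a, b, rfl⟩
      exact Ideal.subset_span ⟨Sum.inl a, Sum.inl b, by simp⟩
    have hJBle : Ideal.span {p : MvPolynomial (Fin r ⊕ Fin s) K |
        ∃ i j : Fin s, p = By i * X (Sum.inr j) - By j * X (Sum.inr i)} ≤ I := by
      refine Ideal.span_le.mpr ?_
      rintro p ⟨a, b, rfl⟩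
      exact Ideal.subset_span ⟨Sum.inr a, Sum.inr b, by simp⟩
    have hMle : Ideal.span {p : MvPolynomial (Fin r ⊕ Fin s) K |
        ∃ i j, p = X (Sum.inl i) * X (Sum.inr j)} ≤ I := by
      refine Ideal.span_le.mpr ?_
      rintro p ⟨i, j, rfl⟩
      have h1 : (X (Sum.inl i) * X (Sum.inr j) : MvPolynomial (Fin r ⊕ Fin s) K) ∈
          Submodule.span K {p : MvPolynomial (Fin r ⊕ Fin s) K |
            ∃ α β, p = Ax α * X (Sum.inr β) - By β * X (Sum.inl α)} := by
        rw [hspan]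
        exact Submodule.subset_span ⟨i, j, rfl⟩
      have h2 : Submodule.span K {p : MvPolynomial (Fin r ⊕ Fin s) K |
            ∃ α β, p = Ax α * X (Sum.inr β) - By β * X (Sum.inl α)} ≤
          Submodule.restrictScalars K I := by
        refine Submodule.span_le.mpr ?_
        rintro q ⟨α, β, rfl⟩
        exact Ideal.subset_span ⟨Sum.inl α, Sum.inr β, by simp⟩
      exact h2 h1
    set qy : MvPolynomial (Fin r ⊕ Fin s) K →ₐ[K] MvPolynomial (Fin r ⊕ Fin s) K :=
      aeval (Sum.elim (fun i => X (Sum.inl i)) fun _ => 0) with hqy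
    set qx : MvPolynomial (Fin r ⊕ Fin s) K →ₐ[K] MvPolynomial (Fin r ⊕ Fin s) K :=
      aeval (Sum.elim (fun _ => 0) fun j => X (Sum.inr j)) with hqx
    set q0 : MvPolynomial (Fin r ⊕ Fin s) K →ₐ[K] MvPolynomial (Fin r ⊕ Fin s) K :=
      aeval (fun _ => 0) with hq0
    have hqyAx : ∀ a, qy (Ax a) = Ax a := by
      intro a
      rw [hAx, hqy]
      simp
    have hqxBy : ∀ b, qx (By b) = By b := by
      intro b
      rw [hBy, hqx]
      simp
    -- qy f ∈ J_A
    have hmapy : qy f ∈ Ideal.span {p : MvPolynomial (Fin r ⊕ Fin s) K |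
        ∃ i j : Fin r, p = Ax i * X (Sum.inl j) - Ax j * X (Sum.inl i)} := by
      rw [← Ideal.span_union] at hf1
      have h3 := Ideal.mem_map_of_mem qy hf1
      rw [Ideal.map_span] at h3
      refine Ideal.span_le.mpr ?_ h3
      rintro p ⟨p', hp', rfl⟩
      rcases hp' with ⟨a, b, rfl⟩ | ⟨b, rfl⟩
      · refine Ideal.subset_span ⟨a, b, ?_⟩
        rw [map_sub, map_mul, map_mul, hqyAx, hqyAx, hqy]
        simp
      · rw [hqy]
        simp
    have hmapx : qx f ∈ Ideal.span {p : MvPolynomial (Fin r ⊕ Fin s) K |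
        ∃ i j : Fin s, p = By i * X (Sum.inr j) - By j * X (Sum.inr i)} := by
      rw [← Ideal.span_union] at hf2
      have h3 := Ideal.mem_map_of_mem qx hf2
      rw [Ideal.map_span] at h3
      refine Ideal.span_le.mpr ?_ h3
      rintro p ⟨p', hp', rfl⟩
      rcases hp' with ⟨a, b, rfl⟩ | ⟨b, rfl⟩
      · refine Ideal.subset_span ⟨a, b, ?_⟩
        rw [map_sub, map_mul, map_mul, hqxBy, hqxBy, hqx]
        simp
      · rw [hqx]
        simp
    have hzero : q0 f = 0 := by
      rw [← Ideal.span_union] at hf1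
      have h3 := Ideal.mem_map_of_mem q0 hf1
      rw [Ideal.map_span] at h3
      have h4 : Ideal.span (q0 '' ({p : MvPolynomial (Fin r ⊕ Fin s) K |
            ∃ i j : Fin r, p = Ax i * X (Sum.inl j) - Ax j * X (Sum.inl i)} ∪
          {p : MvPolynomial (Fin r ⊕ Fin s) K | ∃ β : Fin s, p = X (Sum.inr β)})) ≤ ⊥ := by
        refine Ideal.span_le.mpr ?_
        rintro p ⟨p', hp', rfl⟩
        rcases hp' with ⟨a, b, rfl⟩ | ⟨b, rfl⟩
        · rw [map_sub, map_mul, map_mul, hq0]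
          simp
        · rw [hq0]
          simp
      simpa using h4 h3
    have hT := aux_T_mem f
    have hdecomp : f = qy f + qx f + (f - qy f - qx f + q0 f) := by
      rw [hzero]; ring
    rw [hdecomp]
    exact add_mem (add_mem (hJAle hmapy) (hJBle hmapx)) (hMle hT)
end

section
/- Let J_λ and J_μ be Jordan matrices with distinct eigenvalues λ ≠ μ, of sizes p and q. Then the ideal of 2×2 minors of ((J_λ ⊕ J_μ)z | z) equals ⟨L_λ, y_1,...,y_q⟩ ∩ ⟨L_μ, x_1,...,x_p⟩, where L_λ and L_μ are the 2×2 minors of (J_λ x | x) and (J_μ y | y). -/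
open MvPolynomial

/-- A matrix is a Jordan matrix with single eigenvalue `λ` if its diagonal entries are
`λ`, its superdiagonal entries are `0` or `1`, and all other entries vanish. -/
def IsJordanMatrix {K : Type*} [Field K] {r : ℕ} (J : Matrix (Fin r) (Fin r) K) (lam : K) : Prop :=
  (∀ i, J i i = lam) ∧
  (∀ i j : Fin r, (j : ℕ) = (i : ℕ) + 1 → J i j = 0 ∨ J i j = 1) ∧
  (∀ i j : Fin r, j ≠ i → (j : ℕ) ≠ (i : ℕ) + 1 → J i j = 0)

lemma jordan_row {K : Type*} [Field K] {r : ℕ} {J : Matrix (Fin r) (Fin r) K} {lam : K}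
    (hJ : IsJordanMatrix J lam) {σ : Type*} (v : Fin r → MvPolynomial σ K) (i : Fin r) :
    ∑ k, C (J i k) * v k =
      C lam * v i + (if h : (i : ℕ) + 1 < r then C (J i ⟨i + 1, h⟩) * v ⟨i + 1, h⟩ else 0) := by
  obtain ⟨h1, h2, h3⟩ := hJ
  by_cases h : (i : ℕ) + 1 < r
  · rw [dif_pos h]
    have hne : i ≠ (⟨i + 1, h⟩ : Fin r) := by
      intro he; have := congrArg Fin.val he; simp at this
    rw [← Finset.sum_subset (Finset.subset_univ {i, (⟨i + 1, h⟩ : Fin r)})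
      (fun k _ hk => ?_), Finset.sum_pair hne, h1 i]
    rw [h3 i k (fun hh => hk (by simp [hh])) (fun hh => hk (by simp [Fin.ext_iff, hh]))]
    simp
  · rw [dif_neg h, add_zero]
    rw [Finset.sum_eq_single i (fun k _ hk => ?_) (by simp), h1 i]
    rw [h3 i k hk (fun hh => h (hh ▸ k.isLt))]
    simp


/-- For Jordan matrices `J_λ`, `J_μ` with distinct eigenvalues `λ ≠ μ`, the ideal of
`2×2` minors of `((J_λ ⊕ J_μ)z | z)` equals `⟨L_λ, y⟩ ∩ ⟨L_μ, x⟩`. -/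
theorem eigIdeal_jordan_two_eigenvalues {K : Type*} [Field K] {p q : ℕ}
    (lam mu : K) (hne : lam ≠ mu)
    (Jl : Matrix (Fin p) (Fin p) K) (Jm : Matrix (Fin q) (Fin q) K)
    (hJl : IsJordanMatrix Jl lam) (hJm : IsJordanMatrix Jm mu)
    (Ax : Fin p → MvPolynomial (Fin p ⊕ Fin q) K)
    (By : Fin q → MvPolynomial (Fin p ⊕ Fin q) K)
    (hAx : ∀ α, Ax α = ∑ k, C (Jl α k) * X (Sum.inl k))
    (hBy : ∀ β, By β = ∑ k, C (Jm β k) * X (Sum.inr k)) :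
    eigIdeal (Matrix.fromBlocks Jl 0 0 Jm) =
      (Ideal.span {f | ∃ i j : Fin p, f = Ax i * X (Sum.inl j) - Ax j * X (Sum.inl i)} ⊔
        Ideal.span {f : MvPolynomial (Fin p ⊕ Fin q) K | ∃ β : Fin q, f = X (Sum.inr β)}) ⊓
      (Ideal.span {f | ∃ i j : Fin q, f = By i * X (Sum.inr j) - By j * X (Sum.inr i)} ⊔
        Ideal.span {f : MvPolynomial (Fin p ⊕ Fin q) K | ∃ α : Fin p, f = X (Sum.inl α)}) := by
  classical
  set M := Matrix.fromBlocks Jl 0 0 Jm with hM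
  set Ix : Ideal (MvPolynomial (Fin p ⊕ Fin q) K) :=
    Ideal.span {f : MvPolynomial (Fin p ⊕ Fin q) K | ∃ α : Fin p, f = X (Sum.inl α)} with hIx
  set Iy : Ideal (MvPolynomial (Fin p ⊕ Fin q) K) :=
    Ideal.span {f : MvPolynomial (Fin p ⊕ Fin q) K | ∃ β : Fin q, f = X (Sum.inr β)} with hIy
  set Il : Ideal (MvPolynomial (Fin p ⊕ Fin q) K) :=
    Ideal.span {f | ∃ i j : Fin p, f = Ax i * X (Sum.inl j) - Ax j * X (Sum.inl i)} with hIl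
  set Im : Ideal (MvPolynomial (Fin p ⊕ Fin q) K) :=
    Ideal.span {f | ∃ i j : Fin q, f = By i * X (Sum.inr j) - By j * X (Sum.inr i)} with hIm
  have hrowl : ∀ α : Fin p,
      (∑ k, C (M (Sum.inl α) k) * X k : MvPolynomial (Fin p ⊕ Fin q) K) = Ax α := by
    intro α
    rw [hAx, Fintype.sum_sum_type]
    simp [hM, Matrix.fromBlocks]
  have hrowr : ∀ β : Fin q,
      (∑ k, C (M (Sum.inr β) k) * X k : MvPolynomial (Fin p ⊕ Fin q) K) = By β := by
    intro β
    rw [hBy, Fintype.sum_sum_type]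
    simp [hM, Matrix.fromBlocks]
  have hAxx : ∀ a, Ax a ∈ Ix := by
    intro a; rw [hAx]
    exact Ideal.sum_mem _ fun k _ => Ideal.mul_mem_left _ _ (Ideal.subset_span ⟨k, rfl⟩)
  have hByy : ∀ b, By b ∈ Iy := by
    intro b; rw [hBy]
    exact Ideal.sum_mem _ fun k _ => Ideal.mul_mem_left _ _ (Ideal.subset_span ⟨k, rfl⟩)
  have hIlx : Il ≤ Ix := by
    rw [hIl, Ideal.span_le]
    rintro f ⟨i, j, rfl⟩
    exact sub_mem (Ideal.mul_mem_left _ _ (Ideal.subset_span ⟨j, rfl⟩))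
      (Ideal.mul_mem_left _ _ (Ideal.subset_span ⟨i, rfl⟩))
  have hImy : Im ≤ Iy := by
    rw [hIm, Ideal.span_le]
    rintro f ⟨i, j, rfl⟩
    exact sub_mem (Ideal.mul_mem_left _ _ (Ideal.subset_span ⟨j, rfl⟩))
      (Ideal.mul_mem_left _ _ (Ideal.subset_span ⟨i, rfl⟩))
  -- generators of eigIdeal
  have hIlE : Il ≤ eigIdeal M := by
    rw [hIl, Ideal.span_le]
    rintro f ⟨i, j, rfl⟩
    exact Ideal.subset_span ⟨Sum.inl i, Sum.inl j, by rw [hrowl, hrowl]⟩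
  have hImE : Im ≤ eigIdeal M := by
    rw [hIm, Ideal.span_le]
    rintro f ⟨i, j, rfl⟩
    exact Ideal.subset_span ⟨Sum.inr i, Sum.inr j, by rw [hrowr, hrowr]⟩
  -- key induction : x_α y_β ∈ eigIdeal M
  have hsub : lam - mu ≠ 0 := sub_ne_zero.mpr hne
  have hkey : ∀ n : ℕ, ∀ α : Fin p, ∀ β : Fin q, (p - (α : ℕ)) + (q - (β : ℕ)) ≤ n →
      X (Sum.inl α) * X (Sum.inr β) ∈ eigIdeal M := by
    intro n
    induction n using Nat.strong_induction_on with
    | _ n ih =>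
      intro α β hn
      have hg : (∑ k, C (M (Sum.inl α) k) * X k) * X (Sum.inr β)
          - (∑ k, C (M (Sum.inr β) k) * X k) * X (Sum.inl α) ∈ eigIdeal M :=
        Ideal.subset_span ⟨Sum.inl α, Sum.inr β, rfl⟩
      have hαp : (α : ℕ) < p := α.isLt
      have hβq : (β : ℕ) < q := β.isLt
      obtain ⟨ta, hta, htam⟩ : ∃ ta,
          (∑ k, C (M (Sum.inl α) k) * X k : MvPolynomial (Fin p ⊕ Fin q) K)
            = C lam * X (Sum.inl α) + ta ∧ ta * X (Sum.inr β) ∈ eigIdeal M := by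
        refine ⟨_, by rw [hrowl, hAx, jordan_row hJl (fun k => X (Sum.inl k)) α], ?_⟩
        by_cases h : (α : ℕ) + 1 < p
        · rw [dif_pos h, mul_assoc]
          exact Ideal.mul_mem_left _ _
            (ih ((p - ((α : ℕ) + 1)) + (q - (β : ℕ))) (by omega) ⟨α + 1, h⟩ β le_rfl)
        · rw [dif_neg h, zero_mul]; exact Ideal.zero_mem _
      obtain ⟨tb, htb, htbm⟩ : ∃ tb,
          (∑ k, C (M (Sum.inr β) k) * X k : MvPolynomial (Fin p ⊕ Fin q) K)
            = C mu * X (Sum.inr β) + tb ∧ X (Sum.inl α) * tb ∈ eigIdeal M := by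
        refine ⟨_, by rw [hrowr, hBy, jordan_row hJm (fun k => X (Sum.inr k)) β], ?_⟩
        by_cases h : (β : ℕ) + 1 < q
        · rw [dif_pos h, mul_left_comm]
          exact Ideal.mul_mem_left _ _
            (ih ((p - (α : ℕ)) + (q - ((β : ℕ) + 1))) (by omega) α ⟨β + 1, h⟩ le_rfl)
        · rw [dif_neg h, mul_zero]; exact Ideal.zero_mem _
      rw [hta, htb] at hg
      have hmain : X (Sum.inl α) * X (Sum.inr β) =
          C (lam - mu)⁻¹ *
            (((C lam * X (Sum.inl α) + ta) * X (Sum.inr β)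
              - (C mu * X (Sum.inr β) + tb) * X (Sum.inl α))
              - ta * X (Sum.inr β) + X (Sum.inl α) * tb) := by
        have h1 : ((C lam * X (Sum.inl α) + ta) * X (Sum.inr β)
              - (C mu * X (Sum.inr β) + tb) * X (Sum.inl α))
              - ta * X (Sum.inr β) + X (Sum.inl α) * tb
            = C (lam - mu) * (X (Sum.inl α) * X (Sum.inr β)) := by
          rw [map_sub]; ring
        rw [h1, ← mul_assoc, ← map_mul, inv_mul_cancel₀ hsub, map_one, one_mul]
      rw [hmain]
      exact Ideal.mul_mem_left _ _ (add_mem (sub_mem hg htam) htbm)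
  -- Ix ⊓ Iy ≤ eigIdeal M
  have hxyE : Ix ⊓ Iy ≤ eigIdeal M := by
    intro f hf
    obtain ⟨hfx, hfy⟩ := hf
    have hsetx : {f : MvPolynomial (Fin p ⊕ Fin q) K | ∃ α : Fin p, f = X (Sum.inl α)}
        = X '' (Set.range Sum.inl) := by
      ext g; simp [eq_comm]
    have hsety : {f : MvPolynomial (Fin p ⊕ Fin q) K | ∃ β : Fin q, f = X (Sum.inr β)}
        = X '' (Set.range Sum.inr) := by
      ext g; simp [eq_comm]
    rw [hIx, hsetx] at hfx
    rw [hIy, hsety] at hfy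
    replace hfx := mem_ideal_span_X_image.mp hfx
    replace hfy := mem_ideal_span_X_image.mp hfy
    have hmono : f ∈ Ideal.span ((fun s => monomial s (1 : K)) ''
        {s | ∃ (a : Fin p) (b : Fin q),
          s = Finsupp.single (Sum.inl a) 1 + Finsupp.single (Sum.inr b) 1}) := by
      rw [mem_ideal_span_monomial_image]
      intro m hm
      obtain ⟨i, hi, hine⟩ := hfx m hm
      obtain ⟨j, hj, hjne⟩ := hfy m hm
      obtain ⟨a, rfl⟩ := hi
      obtain ⟨b, rfl⟩ := hj
      refine ⟨_, ⟨a, b, rfl⟩, ?_⟩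
      rw [Finsupp.le_def]
      intro x
      rcases x with a' | b'
      · simp only [Finsupp.add_apply, Finsupp.single_apply]
        by_cases haa : a = a'
        · subst haa
          simpa [Nat.one_le_iff_ne_zero] using hine
        · simp [haa, Sum.inl.injEq]
      · simp only [Finsupp.add_apply, Finsupp.single_apply]
        by_cases hbb : b = b'
        · subst hbb
          simpa [Nat.one_le_iff_ne_zero] using hjne
        · simp [hbb, Sum.inr.injEq]
    refine Ideal.span_le.mpr ?_ hmono
    rintro g ⟨s, ⟨a, b, rfl⟩, rfl⟩
    have hXX : (monomial (Finsupp.single (Sum.inl a) 1 + Finsupp.single (Sum.inr b) 1) (1 : K)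
        : MvPolynomial (Fin p ⊕ Fin q) K) = X (Sum.inl a) * X (Sum.inr b) := by
      rw [X, X, monomial_mul, one_mul]
    show (monomial (Finsupp.single (Sum.inl a) 1 + Finsupp.single (Sum.inr b) 1) (1 : K)) ∈ eigIdeal M
    rw [hXX]
    exact hkey (p + q) a b (by omega)
  -- conclude
  refine le_antisymm ?_ ?_
  · show Ideal.span _ ≤ _
    rw [Ideal.span_le]
    rintro f ⟨i, j, rfl⟩
    rw [SetLike.mem_coe, Submodule.mem_inf]
    rcases i with a | b <;> rcases j with a' | b'
    · rw [hrowl, hrowl]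
      refine ⟨Ideal.mem_sup_left (Ideal.subset_span ⟨a, a', rfl⟩), Ideal.mem_sup_right ?_⟩
      exact sub_mem (Ideal.mul_mem_left _ _ (Ideal.subset_span ⟨a', rfl⟩))
        (Ideal.mul_mem_left _ _ (Ideal.subset_span ⟨a, rfl⟩))
    · rw [hrowl, hrowr]
      constructor
      · exact Ideal.mem_sup_right (sub_mem
          (Ideal.mul_mem_left _ _ (Ideal.subset_span ⟨b', rfl⟩))
          (Ideal.mul_mem_right _ _ (hByy b')))
      · exact Ideal.mem_sup_right (sub_mem
          (Ideal.mul_mem_right _ _ (hAxx a))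
          (Ideal.mul_mem_left _ _ (Ideal.subset_span ⟨a, rfl⟩)))
    · rw [hrowl, hrowr]
      constructor
      · exact Ideal.mem_sup_right (sub_mem
          (Ideal.mul_mem_right _ _ (hByy b))
          (Ideal.mul_mem_left _ _ (Ideal.subset_span ⟨b, rfl⟩)))
      · exact Ideal.mem_sup_right (sub_mem
          (Ideal.mul_mem_left _ _ (Ideal.subset_span ⟨a', rfl⟩))
          (Ideal.mul_mem_right _ _ (hAxx a')))
    · rw [hrowr, hrowr]
      refine ⟨Ideal.mem_sup_right ?_, Ideal.mem_sup_left (Ideal.subset_span ⟨b, b', rfl⟩)⟩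
      exact sub_mem (Ideal.mul_mem_left _ _ (Ideal.subset_span ⟨b', rfl⟩))
        (Ideal.mul_mem_left _ _ (Ideal.subset_span ⟨b, rfl⟩))
  · intro f hf
    rw [Submodule.mem_inf] at hf
    obtain ⟨h1, h2⟩ := hf
    obtain ⟨a, ha, b, hb, rfl⟩ := Submodule.mem_sup.mp h1
    have hb2 : b ∈ Im ⊔ Ix := by
      have ha2 : a ∈ Im ⊔ Ix := Ideal.mem_sup_right (hIlx ha)
      have := sub_mem h2 ha2
      simpa using this
    obtain ⟨c, hc, d, hd, hcd⟩ := Submodule.mem_sup.mp hb2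
    have hdy : d ∈ Iy := by
      have : d = b - c := by rw [← hcd]; ring
      rw [this]
      exact sub_mem hb (hImy hc)
    have hdE : d ∈ eigIdeal M := hxyE ⟨hd, hdy⟩
    have : a + b = a + (c + d) := by rw [hcd]
    rw [this]
    exact add_mem (hIlE ha) (add_mem (hImE hc) hdE)
end

section
/- Let J = J_{λ_1} ⊕ ... ⊕ J_{λ_n} (n ≥ 2) be a Jordan matrix whose blocks J_{λ_i} have pairwise distinct eigenvalues λ_1,...,λ_n. Then I_J = ⋂_{i=1}^n (⟨L_{λ_i}⟩ + p_i), where L_{λ_i} are the 2×2 minors of (J_{λ_i} x_i | x_i) in the i-th block of variables and p_i is the ideal generated by all variables outside the i-th block. -/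
open MvPolynomial

section Aux
variable {K : Type*} [Field K] {n : ℕ} {ξ : Fin n → ℕ}
  (J : ∀ i : Fin n, Matrix (Fin (ξ i)) (Fin (ξ i)) K)

noncomputable def Lf (v : Σ i : Fin n, Fin (ξ i)) : MvPolynomial (Σ i : Fin n, Fin (ξ i)) K :=
  ∑ k, C (Matrix.blockDiagonal' J v k) * X k

lemma Lf_eq (i : Fin n) (a : Fin (ξ i)) :
    Lf J ⟨i,a⟩ = ∑ k : Fin (ξ i), C (J i a k) * X (⟨i,k⟩ : Σ i, Fin (ξ i)) := by
  rw [Lf, ← Finset.univ_sigma_univ, Finset.sum_sigma]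
  rw [Finset.sum_eq_single i]
  · simp [Matrix.blockDiagonal'_apply_eq]
  · intro b _ hb
    apply Finset.sum_eq_zero
    intro k _
    rw [Matrix.blockDiagonal'_apply_ne _ _ _ (Ne.symm hb)]
    simp
  · simp

end Aux

section Aux2
variable {K : Type*} [Field K] {n : ℕ} {ξ : Fin n → ℕ}
  {J : ∀ i : Fin n, Matrix (Fin (ξ i)) (Fin (ξ i)) K} {lam : Fin n → K}

lemma Lf_jordan (hJ : ∀ i, IsJordanMatrix (J i) (lam i)) (i : Fin n) (a : Fin (ξ i)) :
    Lf J ⟨i,a⟩ = C (lam i) * X (⟨i,a⟩ : Σ i, Fin (ξ i)) +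
      (if h : (a:ℕ)+1 < ξ i then C (J i a ⟨(a:ℕ)+1,h⟩) * X (⟨i,⟨(a:ℕ)+1,h⟩⟩ : Σ i, Fin (ξ i))
        else 0) := by
  obtain ⟨hd, _, hz⟩ := hJ i
  rw [Lf_eq]
  split_ifs with h
  · rw [← Finset.sum_subset (Finset.subset_univ {a, ⟨(a:ℕ)+1, h⟩})]
    · rw [Finset.sum_pair (by intro he; exact absurd (congrArg Fin.val he) (by simp)), hd]
    · intro k _ hk
      simp only [Finset.mem_insert, Finset.mem_singleton] at hk
      push_neg at hk
      rw [hz a k hk.1 (by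
        intro he; exact hk.2 (Fin.ext (by simpa using he))), map_zero, zero_mul]
  · rw [Finset.sum_eq_single a]
    · rw [hd]; ring
    · intro k _ hk
      rw [hz a k hk (fun he => h (he ▸ k.isLt)), map_zero, zero_mul]
    · simp

lemma Lf_mem_eigIdeal (v w : Σ i : Fin n, Fin (ξ i)) :
    Lf J v * X w - Lf J w * X v ∈ eigIdeal (Matrix.blockDiagonal' J) :=
  Ideal.subset_span ⟨v, w, rfl⟩

lemma cross_mem (hlam : Function.Injective lam) (hJ : ∀ i, IsJordanMatrix (J i) (lam i))
    {i j : Fin n} (hij : i ≠ j) (a : Fin (ξ i)) (b : Fin (ξ j)) :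
    X (⟨i,a⟩ : Σ i, Fin (ξ i)) * X (⟨j,b⟩ : Σ i, Fin (ξ i)) ∈
      eigIdeal (Matrix.blockDiagonal' J) := by
  set I := eigIdeal (Matrix.blockDiagonal' J) with hI
  have key : ∀ c : ℕ, ∀ (a : Fin (ξ i)) (b : Fin (ξ j)),
      (ξ i - 1 - (a:ℕ)) + (ξ j - 1 - (b:ℕ)) = c →
      X (⟨i,a⟩ : Σ i, Fin (ξ i)) * X (⟨j,b⟩ : Σ i, Fin (ξ i)) ∈ I := by
    intro c
    induction c using Nat.strong_induction_on with
    | _ c ih =>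
      intro a b hc
      have hg := Lf_mem_eigIdeal (J := J) ⟨i,a⟩ ⟨j,b⟩
      rw [Lf_jordan hJ, Lf_jordan hJ] at hg
      have hSi : (if h : (a:ℕ)+1 < ξ i then
          C (J i a ⟨(a:ℕ)+1,h⟩) * X (⟨i,⟨(a:ℕ)+1,h⟩⟩ : Σ i, Fin (ξ i)) else 0) *
          X (⟨j,b⟩ : Σ i, Fin (ξ i)) ∈ I := by
        split_ifs with h
        · rw [mul_assoc]
          exact Ideal.mul_mem_left _ _ (ih ((ξ i - 1 - ((a:ℕ)+1)) + (ξ j - 1 - (b:ℕ)))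
            (by omega) ⟨(a:ℕ)+1,h⟩ b rfl)
        · rw [zero_mul]; exact Ideal.zero_mem _
      have hSj : (if h : (b:ℕ)+1 < ξ j then
          C (J j b ⟨(b:ℕ)+1,h⟩) * X (⟨j,⟨(b:ℕ)+1,h⟩⟩ : Σ i, Fin (ξ i)) else 0) *
          X (⟨i,a⟩ : Σ i, Fin (ξ i)) ∈ I := by
        split_ifs with h
        · rw [mul_assoc]
          have := ih ((ξ i - 1 - (a:ℕ)) + (ξ j - 1 - ((b:ℕ)+1))) (by omega) a ⟨(b:ℕ)+1,h⟩ rfl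
          rw [mul_comm] at this
          exact Ideal.mul_mem_left _ _ this
        · rw [zero_mul]; exact Ideal.zero_mem _
      have hkey : C (lam i - lam j) *
          (X (⟨i,a⟩ : Σ i, Fin (ξ i)) * X (⟨j,b⟩ : Σ i, Fin (ξ i))) ∈ I := by
        have h2 := I.add_mem (I.sub_mem hg hSi) hSj
        convert h2 using 1
        rw [map_sub]
        ring
      have hne : lam i - lam j ≠ 0 := sub_ne_zero.mpr (fun h => hij (hlam h))
      have := Ideal.mul_mem_left I (C (lam i - lam j)⁻¹) hkey
      rwa [← mul_assoc, ← map_mul, inv_mul_cancel₀ hne, map_one, one_mul] at this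
  exact key _ a b rfl


noncomputable def pim (ξ : Fin n → ℕ) (i : Fin n) :
    MvPolynomial (Σ i : Fin n, Fin (ξ i)) K →ₐ[K] MvPolynomial (Σ i : Fin n, Fin (ξ i)) K :=
  aeval (fun v => if v.1 = i then X v else 0)

lemma pim_X (i : Fin n) (v : Σ i : Fin n, Fin (ξ i)) :
    pim (K := K) ξ i (X v) = if v.1 = i then X v else 0 := by simp [pim]

lemma pim_monomial_eq (i : Fin n) (m : (Σ i : Fin n, Fin (ξ i)) →₀ ℕ) (c : K)
    (h : ∀ v ∈ m.support, v.1 = i) : pim ξ i (monomial m c) = monomial m c := by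
  rw [pim, aeval_monomial, monomial_eq]
  congr 1
  rw [Finsupp.prod, Finsupp.prod]
  apply Finset.prod_congr rfl
  intro v hv
  rw [if_pos (h v hv)]

lemma pim_monomial_ne (i : Fin n) (m : (Σ i : Fin n, Fin (ξ i)) →₀ ℕ) (c : K)
    (h : ∃ v ∈ m.support, v.1 ≠ i) : pim ξ i (monomial m c) = 0 := by
  obtain ⟨v, hv, hvi⟩ := h
  rw [pim, aeval_monomial, Finsupp.prod]
  rw [Finset.prod_eq_zero hv]
  · rw [mul_zero]
  · rw [if_neg hvi, zero_pow (Finsupp.mem_support_iff.mp hv)]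

lemma mixed_monomial_mem (hlam : Function.Injective lam)
    (hJ : ∀ i, IsJordanMatrix (J i) (lam i)) (m : (Σ i : Fin n, Fin (ξ i)) →₀ ℕ) (c : K)
    {v w : Σ i : Fin n, Fin (ξ i)} (hv : v ∈ m.support) (hw : w ∈ m.support)
    (hvw : v.1 ≠ w.1) : monomial m c ∈ eigIdeal (Matrix.blockDiagonal' J) := by
  have hne : v ≠ w := fun h => hvw (congrArg Sigma.fst h)
  have hle : Finsupp.single v 1 + Finsupp.single w 1 ≤ m := by
    intro x
    rw [Finsupp.add_apply, Finsupp.single_apply, Finsupp.single_apply]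
    rcases eq_or_ne v x with rfl | hx
    · rw [if_pos rfl, if_neg (Ne.symm hne)]
      simpa using Nat.one_le_iff_ne_zero.mpr (Finsupp.mem_support_iff.mp hv)
    · rw [if_neg hx]
      rcases eq_or_ne w x with rfl | hy
      · rw [if_pos rfl]
        simpa using Nat.one_le_iff_ne_zero.mpr (Finsupp.mem_support_iff.mp hw)
      · rw [if_neg hy]; simp
  have hXX : X v * X w ∈ eigIdeal (Matrix.blockDiagonal' J) := by
    obtain ⟨iv, av⟩ := v
    obtain ⟨iw, aw⟩ := w
    exact cross_mem hlam hJ hvw av aw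
  have heq : monomial m c = X v * X w * monomial (m - (Finsupp.single v 1 + Finsupp.single w 1)) c := by
    rw [X, X, monomial_mul, monomial_mul, one_mul, one_mul, add_tsub_cancel_of_le hle]
  rw [heq]
  exact Ideal.mul_mem_right _ _ hXX


lemma constantCoeff_pim (i : Fin n) (f : MvPolynomial (Σ i : Fin n, Fin (ξ i)) K) :
    constantCoeff (pim ξ i f) = constantCoeff f := by
  have h : (constantCoeff.comp (pim (K := K) ξ i).toRingHom) = constantCoeff := by
    apply MvPolynomial.ringHom_ext
    · intro a
      simp [pim]
    · intro v
      simp only [RingHom.comp_apply, AlgHom.toRingHom_eq_coe, RingHom.coe_coe, pim_X]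
      split_ifs <;> simp
  exact RingHom.congr_fun h f

lemma decomp_mem (hlam : Function.Injective lam) (hJ : ∀ i, IsJordanMatrix (J i) (lam i))
    (f : MvPolynomial (Σ i : Fin n, Fin (ξ i)) K) (h0 : constantCoeff f = 0) :
    f - ∑ i, pim ξ i f ∈ eigIdeal (Matrix.blockDiagonal' J) := by
  rw [show f - ∑ i, pim ξ i f
      = ∑ m ∈ f.support, (monomial m (coeff m f) - ∑ i, pim ξ i (monomial m (coeff m f))) from by
    rw [Finset.sum_sub_distrib]
    congr 1
    · exact (support_sum_monomial_coeff f).symm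
    · rw [Finset.sum_comm]
      exact Finset.sum_congr rfl fun i _ => by
        rw [← map_sum, support_sum_monomial_coeff]]
  apply Ideal.sum_mem
  intro m hm
  have hm0 : m ≠ 0 := by
    rintro rfl
    exact (MvPolynomial.mem_support_iff.mp hm) (by rw [← h0]; rfl)
  by_cases hone : ∃ i, ∀ v ∈ m.support, v.1 = i
  · obtain ⟨i0, hi0⟩ := hone
    obtain ⟨v0, hv0⟩ := Finsupp.support_nonempty_iff.mpr hm0
    rw [Finset.sum_eq_single i0]
    · rw [pim_monomial_eq _ _ _ hi0, sub_self]
      exact Ideal.zero_mem _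
    · intro i _ hi
      exact pim_monomial_ne _ _ _ ⟨v0, hv0, fun h => hi (h.symm.trans (hi0 v0 hv0))⟩
    · intro h
      exact absurd (Finset.mem_univ i0) h
  · push_neg at hone
    obtain ⟨v0, hv0⟩ := Finsupp.support_nonempty_iff.mpr hm0
    obtain ⟨w0, hw0, hw0'⟩ := hone v0.1
    have hsum : ∑ i, pim ξ i (monomial m (coeff m f)) = 0 :=
      Finset.sum_eq_zero fun i _ => pim_monomial_ne _ _ _ (hone i)
    rw [hsum, sub_zero]
    exact mixed_monomial_mem hlam hJ m (coeff m f) hw0 hv0 hw0'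


def S1set (J : ∀ i : Fin n, Matrix (Fin (ξ i)) (Fin (ξ i)) K) (i : Fin n) :
    Set (MvPolynomial (Σ i : Fin n, Fin (ξ i)) K) :=
  {f | ∃ a b : Fin (ξ i),
    f = (∑ k, C (J i a k) * X (⟨i, k⟩ : Σ i : Fin n, Fin (ξ i))) * X ⟨i, b⟩ -
      (∑ k, C (J i b k) * X (⟨i, k⟩ : Σ i : Fin n, Fin (ξ i))) * X ⟨i, a⟩}

def S2set (ξ : Fin n → ℕ) (K : Type*) [Field K] (i : Fin n) :
    Set (MvPolynomial (Σ i : Fin n, Fin (ξ i)) K) :=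
  {f | ∃ v : Σ i : Fin n, Fin (ξ i), v.1 ≠ i ∧ f = X v}

lemma S1span_le (i : Fin n) :
    Ideal.span (S1set J i) ≤ eigIdeal (Matrix.blockDiagonal' J) := by
  rw [Ideal.span_le]
  rintro p ⟨a, b, rfl⟩
  rw [← Lf_eq J i a, ← Lf_eq J i b]
  exact Lf_mem_eigIdeal _ _

lemma S1span_constantCoeff (i : Fin n) :
    Ideal.span (S1set J i) ≤ RingHom.ker (constantCoeff (σ := Σ i : Fin n, Fin (ξ i)) (R := K)) := by
  rw [Ideal.span_le]
  rintro p ⟨a, b, rfl⟩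
  simp [RingHom.mem_ker]

lemma pim_S1 (i : Fin n) {f : MvPolynomial (Σ i : Fin n, Fin (ξ i)) K}
    (hf : f ∈ Ideal.span (S1set J i) ⊔ Ideal.span (S2set ξ K i)) :
    pim ξ i f ∈ Ideal.span (S1set J i) := by
  rw [← Ideal.span_union] at hf
  have h3 := Ideal.mem_map_of_mem (pim (K := K) ξ i).toRingHom hf
  rw [Ideal.map_span] at h3
  refine Ideal.span_le.mpr ?_ h3
  rintro p ⟨q, hq | hq, rfl⟩
  · obtain ⟨a, b, rfl⟩ := hq
    show pim ξ i _ ∈ _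
    have heq : pim (K := K) ξ i
        ((∑ k, C (J i a k) * X (⟨i, k⟩ : Σ i : Fin n, Fin (ξ i))) * X ⟨i, b⟩ -
          (∑ k, C (J i b k) * X (⟨i, k⟩ : Σ i : Fin n, Fin (ξ i))) * X ⟨i, a⟩) =
        (∑ k, C (J i a k) * X (⟨i, k⟩ : Σ i : Fin n, Fin (ξ i))) * X ⟨i, b⟩ -
          (∑ k, C (J i b k) * X (⟨i, k⟩ : Σ i : Fin n, Fin (ξ i))) * X ⟨i, a⟩ := by
      simp [pim]
    rw [heq]
    exact Ideal.subset_span ⟨a, b, rfl⟩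
  · obtain ⟨v, hv, rfl⟩ := hq
    show pim ξ i _ ∈ _
    rw [pim_X, if_neg hv]
    exact Ideal.zero_mem _

end Aux2

/-- For a Jordan matrix `J = J_{λ_1} ⊕ ... ⊕ J_{λ_n}` with pairwise distinct eigenvalues,
`I_J = ⋂ᵢ (⟨L_{λ_i}⟩ + p_i)`, where `L_{λ_i}` are the minors of `(J_{λ_i} x_i | x_i)` in
the `i`-th block of variables and `p_i` is generated by the variables outside block `i`. -/
theorem eigIdeal_jordan_distinct_eigenvalues {K : Type*} [Field K] {n : ℕ} (hn : 2 ≤ n)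
    (ξ : Fin n → ℕ) (lam : Fin n → K) (hlam : Function.Injective lam)
    (J : ∀ i : Fin n, Matrix (Fin (ξ i)) (Fin (ξ i)) K)
    (hJ : ∀ i, IsJordanMatrix (J i) (lam i)) :
    eigIdeal (Matrix.blockDiagonal' J) =
      ⨅ i : Fin n,
        (Ideal.span {f : MvPolynomial (Σ i : Fin n, Fin (ξ i)) K | ∃ a b : Fin (ξ i),
            f = (∑ k, C (J i a k) * X (⟨i, k⟩ : Σ i : Fin n, Fin (ξ i))) * X ⟨i, b⟩ -
              (∑ k, C (J i b k) * X (⟨i, k⟩ : Σ i : Fin n, Fin (ξ i))) * X ⟨i, a⟩} ⊔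
          Ideal.span {f : MvPolynomial (Σ i : Fin n, Fin (ξ i)) K | ∃ v : Σ i : Fin n, Fin (ξ i),
            v.1 ≠ i ∧ f = X v}) := by
  show eigIdeal (Matrix.blockDiagonal' J) =
    ⨅ i : Fin n, (Ideal.span (S1set J i) ⊔ Ideal.span (S2set ξ K i))
  apply le_antisymm
  · apply le_iInf
    intro i
    rw [eigIdeal, Ideal.span_le]
    rintro p ⟨v, w, rfl⟩
    have hLp : ∀ v w : Σ i : Fin n, Fin (ξ i), v.1 ≠ i ∨ w.1 ≠ i →
        Lf J v * X w ∈ Ideal.span (S2set ξ K i) := by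
      rintro ⟨v1, v2⟩ w (hv | hw)
      · apply Ideal.mul_mem_right
        rw [Lf_eq]
        exact Ideal.sum_mem _ fun k _ => Ideal.mul_mem_left _ _
          (Ideal.subset_span ⟨⟨v1, k⟩, hv, rfl⟩)
      · exact Ideal.mul_mem_left _ _ (Ideal.subset_span ⟨w, hw, rfl⟩)
    obtain ⟨i1, a⟩ := v
    obtain ⟨j1, b⟩ := w
    by_cases hij : i1 = i ∧ j1 = i
    · obtain ⟨h1, h2⟩ := hij
      subst h1
      subst h2
      apply Ideal.mem_sup_left
      show Lf J ⟨j1, a⟩ * X ⟨j1, b⟩ - Lf J ⟨j1, b⟩ * X ⟨j1, a⟩ ∈ _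
      rw [Lf_eq, Lf_eq]
      exact Ideal.subset_span ⟨a, b, rfl⟩
    · apply Ideal.mem_sup_right
      apply sub_mem
      · exact hLp ⟨i1, a⟩ ⟨j1, b⟩ (by tauto)
      · exact hLp ⟨j1, b⟩ ⟨i1, a⟩ (by tauto)
  · intro f hf
    simp only [Ideal.mem_iInf] at hf
    have hS1 : ∀ i, pim ξ i f ∈ Ideal.span (S1set J i) := fun i => pim_S1 i (hf i)
    have hc0 : constantCoeff f = 0 := by
      have h := S1span_constantCoeff (J := J) ⟨0, by omega⟩ (hS1 ⟨0, by omega⟩)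
      rwa [RingHom.mem_ker, constantCoeff_pim] at h
    have h1 := decomp_mem hlam hJ f hc0
    have h2 : ∑ i, pim ξ i f ∈ eigIdeal (Matrix.blockDiagonal' J) :=
      Ideal.sum_mem _ fun i _ => S1span_le i (hS1 i)
    have h3 := Ideal.add_mem _ h1 h2
    rwa [sub_add_cancel] at h3
end
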